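/- arXiv:1702.04086 — 5 statements merged into one kernel-verified Lean document; each statement's English description precedes it below -/
import Mathlib

section
/- The only self-reciprocal primitive polynomials over GF(2) are x+1 and x²+x+1. -/
/-!
Let `α` be the image of `X` in the field `AdjoinRoot f` and `m = deg f`; primitivity says that
`α` has order `2 ^ m - 1`. The roots of `f` are its `m` Frobenius conjugates `α ^ 2 ^ j`, `j < m`,
which are pairwise distinct since (for `m ≥ 2`) the exponents `2 ^ j` are below the order of `α`.
If `f` is self-reciprocal, `α⁻¹` is also a root, so `α ^ (2 ^ j + 1) = 1` for some `j < m`, whence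
`2 ^ m - 1 ∣ 2 ^ j + 1 ≤ 2 ^ (m - 1) + 1`, forcing `m ≤ 2`. The only irreducible quadratic over
`GF(2)` is `x² + x + 1`, and the only degree one factor of `x - 1` is `x + 1`.
-/

open Polynomial

/-- A polynomial over `GF(2)` is primitive if it is irreducible and the order of `x`
modulo `f` is `2^m − 1` where `m = deg f`; equivalently, `f` divides `X^(2^m−1) − 1`
and divides no `X^k − 1` for `0 < k < 2^m − 1`. -/
def IsPrimitivePoly (f : Polynomial (ZMod 2)) : Prop :=
  Irreducible f ∧
    f ∣ (X ^ (2 ^ f.natDegree - 1) - 1) ∧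
    ∀ k : ℕ, 0 < k → k < 2 ^ f.natDegree - 1 → ¬ f ∣ (X ^ k - 1)

theorem AdjoinRoot.root_pow_eq_one_iff {R : Type*} [CommRing R] {f : R[X]} {n : ℕ} :
    root f ^ n = 1 ↔ f ∣ X ^ n - 1 := by
  rw [← sub_eq_zero, ← mk_X, ← map_pow, ← map_one (mk f), ← map_sub, mk_eq_zero]

theorem Polynomial.aeval_inv_eq_zero_of_reverse_eq {R K : Type*} [CommSemiring R] [Field K]
    [Algebra R K] {f : R[X]} (hf : f.reverse = f) {a : K} (ha : a ≠ 0) (hroot : aeval a f = 0) :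
    aeval a⁻¹ f = 0 := by
  let : Invertible a := invertibleOfNonzero ha
  rwa [← invOf_eq_inv, ← hf, aeval_def, eval₂_reverse_eq_zero_iff, ← aeval_def]

theorem pow_pow_injOn_Iio_of_orderOf_eq {M : Type*} [Monoid M] {a : M} {q m : ℕ} (hq : 2 ≤ q)
    (horder : orderOf a = q ^ m - 1) : Set.InjOn (fun j => a ^ q ^ j) (Set.Iio m) := by
  intro i hi j hj hij
  simp only [Set.mem_Iio] at hi hj
  obtain hm | hm : m = 1 ∨ 2 ≤ m := by omega
  · omega
  have hlt : ∀ k < m, q ^ k < orderOf a := fun k hk => by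
    have h1 : q ^ k ≤ q ^ (m - 1) := Nat.pow_le_pow_right (by omega) (by omega)
    have h2 : q ≤ q ^ (m - 1) := Nat.le_self_pow (by omega) q
    have h3 : 2 * q ^ (m - 1) ≤ q ^ m := calc
      2 * q ^ (m - 1) ≤ q * q ^ (m - 1) := Nat.mul_le_mul_right _ hq
      _ = q ^ m := by rw [← pow_succ', Nat.sub_add_cancel (by omega)]
    omega
  exact Nat.pow_right_injective hq (pow_injOn_Iio_orderOf (hlt i hi) (hlt j hj) hij)

section FiniteField

variable {F K : Type*} [Field F] [Fintype F] [Field K] [Algebra F K] {f : F[X]} {a : K}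

theorem aeval_pow_card_pow_eq_zero (hroot : aeval a f = 0) (j : ℕ) :
    aeval (a ^ Fintype.card F ^ j) f = 0 := by
  induction j with
  | zero => simpa using hroot
  | succ j ih =>
    rw [pow_succ, pow_mul, ← expand_aeval, FiniteField.expand_card, map_pow, ih,
      zero_pow Fintype.card_ne_zero]

theorem exists_eq_pow_card_pow_of_aeval_eq_zero (hf : f ≠ 0) (hroot : aeval a f = 0)
    (horder : orderOf a = Fintype.card F ^ f.natDegree - 1) {b : K} (hb : aeval b f = 0) :
    ∃ j < f.natDegree, b = a ^ Fintype.card F ^ j := by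
  classical
  set conj := (Finset.range f.natDegree).image fun j => a ^ Fintype.card F ^ j
  have hconj_card : conj.card = f.natDegree := by
    rw [Finset.card_image_of_injOn, Finset.card_range]
    simpa using pow_pow_injOn_Iio_of_orderOf_eq Fintype.one_lt_card horder
  have hconj_sub : conj ⊆ (f.aroots K).toFinset := by
    simp only [conj, Finset.image_subset_iff, Multiset.mem_toFinset, mem_aroots]
    exact fun j _ => ⟨hf, aeval_pow_card_pow_eq_zero hroot j⟩
  have hroots_card : (f.aroots K).toFinset.card ≤ f.natDegree :=
    (Multiset.toFinset_card_le _).trans ((card_roots' _).trans natDegree_map_le)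
  have hb_mem : b ∈ conj := by
    rw [Finset.eq_of_subset_of_card_le hconj_sub (hconj_card ▸ hroots_card)]
    simpa [mem_aroots] using ⟨hf, hb⟩
  simpa [conj, eq_comm] using hb_mem

end FiniteField

theorem Polynomial.monic_of_ne_zero_zmod_two {p : (ZMod 2)[X]} (hp : p ≠ 0) : p.Monic := by
  have hunit : ∀ c : ZMod 2, c ≠ 0 → c = 1 := by decide
  exact hunit _ (leadingCoeff_ne_zero.mpr hp)

theorem Polynomial.eq_X_sq_add_X_add_one_of_irreducible {f : (ZMod 2)[X]} (hirr : Irreducible f)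
    (hdeg : f.natDegree = 2) : f = X ^ 2 + X + 1 := by
  have hmonic := monic_of_ne_zero_zmod_two hirr.ne_zero
  have hf : f = X ^ 2 + C (f.coeff 1) * X + C (f.coeff 0) := by
    ext n
    rcases n with _ | _ | _ | n
    · simp
    · simp
    · simpa [coeff_X_pow, hdeg] using hmonic.coeff_natDegree
    · simp [coeff_X_pow, coeff_eq_zero_of_natDegree_lt (by omega : f.natDegree < n + 3)]
  have hno_root : ∀ r : ZMod 2, r ^ 2 + f.coeff 1 * r + f.coeff 0 ≠ 0 := fun r hr => by
    have := degree_eq_one_of_irreducible_of_root hirr (x := r) (by rw [hf]; simpa using hr)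
    rw [degree_eq_natDegree hirr.ne_zero, hdeg] at this
    exact absurd this (by decide)
  have hcoeff : f.coeff 1 = 1 ∧ f.coeff 0 = 1 := by
    revert hno_root
    generalize f.coeff 1 = b
    generalize f.coeff 0 = c
    revert b c
    decide
  rw [hf, hcoeff.1, hcoeff.2, map_one, one_mul]

namespace IsPrimitivePoly

variable {f : (ZMod 2)[X]}

theorem eq_X_add_one_of_natDegree_eq_one (hf : IsPrimitivePoly f) (hdeg : f.natDegree = 1) :
    f = X + 1 := by
  have hdvd := hf.2.1
  rw [hdeg, pow_one, show 2 - 1 = 1 from rfl, pow_one, CharTwo.sub_eq_add] at hdvd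
  refine (eq_of_monic_of_dvd_of_natDegree_le (monic_of_ne_zero_zmod_two hf.1.ne_zero)
    (monic_X_add_C 1) ?_ ?_).symm
  · simpa using hdvd
  · rw [natDegree_X_add_C, hdeg]

theorem orderOf_root (hf : IsPrimitivePoly f) :
    orderOf (AdjoinRoot.root f) = 2 ^ f.natDegree - 1 := by
  obtain ⟨hirr, hdvd, hmin⟩ := hf
  have hpos : 0 < 2 ^ f.natDegree - 1 := by
    have := Nat.one_lt_two_pow hirr.natDegree_pos.ne'
    omega
  rw [orderOf_eq_iff hpos, AdjoinRoot.root_pow_eq_one_iff]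
  exact ⟨hdvd, fun k hk hk0 hroot => hmin k hk0 hk (AdjoinRoot.root_pow_eq_one_iff.mp hroot)⟩

theorem natDegree_le_two_of_reverse_eq (hf : IsPrimitivePoly f) (hsr : f.reverse = f) :
    f.natDegree ≤ 2 := by
  by_contra! hdeg
  have := Fact.mk hf.1
  have horder := hf.orderOf_root
  set a := AdjoinRoot.root f
  have hroot : aeval a f = 0 := AdjoinRoot.aeval_eq f ▸ AdjoinRoot.mk_self
  have htwo_pow : 2 ^ f.natDegree = 2 * 2 ^ (f.natDegree - 1) := by
    rw [← pow_succ', Nat.sub_add_cancel (by omega)]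
  have hfour : 2 ^ 2 ≤ 2 ^ (f.natDegree - 1) := Nat.pow_le_pow_right two_pos (by omega)
  have ha : a ≠ 0 := (orderOf_pos_iff.mp (by omega)).isUnit.ne_zero
  obtain ⟨j, hj, hinv⟩ := exists_eq_pow_card_pow_of_aeval_eq_zero hf.1.ne_zero hroot
    (by rwa [ZMod.card]) (aeval_inv_eq_zero_of_reverse_eq hsr ha hroot)
  rw [ZMod.card] at hinv
  have hdvd : 2 ^ f.natDegree - 1 ∣ 2 ^ j + 1 := by
    rw [← horder]
    exact orderOf_dvd_of_pow_eq_one (by rw [pow_succ, ← hinv, inv_mul_cancel₀ ha])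
  have hj_le : 2 ^ j ≤ 2 ^ (f.natDegree - 1) := Nat.pow_le_pow_right two_pos (by omega)
  have hle := Nat.le_of_dvd (Nat.succ_pos _) hdvd
  omega

end IsPrimitivePoly

/-- The only self-reciprocal primitive polynomials over `GF(2)` are `x + 1` and
`x² + x + 1`.  (A polynomial is self-reciprocal if it equals its reciprocal
`f̂(x) = x^{deg f} f(1/x)`, i.e. `f.reverse = f`.) -/
theorem selfReciprocal_primitive (f : Polynomial (ZMod 2))
    (hf : IsPrimitivePoly f) (hsr : f.reverse = f) :
    f = X + 1 ∨ f = X ^ 2 + X + 1 := by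
  have hpos := hf.1.natDegree_pos
  obtain hdeg | hdeg : f.natDegree = 1 ∨ f.natDegree = 2 := by
    have := hf.natDegree_le_two_of_reverse_eq hsr
    omega
  · exact Or.inl (hf.eq_X_add_one_of_natDegree_eq_one hdeg)
  · exact Or.inr (eq_X_sq_add_X_add_one_of_irreducible hf.1 hdeg)
end

section
/- Let n = 2^m − 1 with m ≥ 3, and let φ : ℤ/nℤ → GF(2) be an m-sequence (Golomb sequence). Then the autocorrelation is two-valued: Σ_{i=0}^{n−1} (−1)^{φ(i)+φ(i+a)} equals n when a ≡ 0 mod n, and equals −1 for every a not divisible by n. -/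
/-!
The solutions of the recurrence are the kernel `V` of `f(T)`, where `T` is the cyclic shift
`g ↦ g(· + 1)` on `ZMod n → GF(2)`; a solution is determined by its first `m` values, so
`|V| ≤ 2^m`. If `φ(· + d) = φ` then `φ` is killed by both `f(T)` and `T^d − 1`, so the irreducible
`f` divides `X^d − 1`, which primitivity forbids for `0 < d < n`. Hence the `n` shifts of `φ` are
distinct and, together with `0`, exhaust `V`. For `a ≠ 0` the sequence `φ + φ(· + a) ∈ V` is
nonzero, hence itself a shift of `φ`, and the autocorrelation becomes `∑ᵢ (-1)^φ(i)`. Summing the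
nonzero character `v ↦ (-1)^v(0)` over `V` gives `0 = 1 + ∑ᵢ (-1)^φ(i)`.
-/

open Polynomial

/-- `φ : ℤ/nℤ → GF(2)` (with `n = 2^m − 1`) is a binary m-sequence (Golomb sequence):
it is nonzero and satisfies the order-`m` linear recursion
`φ(i+m) = Σ_{j<m} f_j φ(i+j)` whose characteristic polynomial `f` is primitive of
degree `m`. -/
def IsMSequence (m n : ℕ) [NeZero n] (φ : ZMod n → ZMod 2) : Prop :=
  φ ≠ 0 ∧ ∃ f : Polynomial (ZMod 2), IsPrimitivePoly f ∧ f.natDegree = m ∧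
    ∀ i : ZMod n, φ (i + (m : ZMod n)) =
      ∑ j ∈ Finset.range m, f.coeff j * φ (i + (j : ZMod n))

def cyclicShift (R : Type*) [CommRing R] (n : ℕ) : Module.End R (ZMod n → R) :=
  LinearMap.funLeft R R (· + 1)

section CyclicShift

variable {R : Type*} [CommRing R] {n : ℕ}

theorem cyclicShift_pow_apply (k : ℕ) (g : ZMod n → R) (i : ZMod n) :
    (cyclicShift R n ^ k) g i = g (i + k) := by
  induction k generalizing g i with
  | zero => simp
  | succ k ih =>
    rw [pow_succ, Module.End.mul_apply, ih]
    simp [cyclicShift, add_assoc]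

theorem cyclicShift_pow_val_apply [NeZero n] (k : ZMod n) (g : ZMod n → R) (i : ZMod n) :
    (cyclicShift R n ^ k.val) g i = g (i + k) := by
  rw [cyclicShift_pow_apply, ZMod.natCast_zmod_val]

theorem aeval_cyclicShift_apply (p : R[X]) (g : ZMod n → R) (i : ZMod n) :
    aeval (cyclicShift R n) p g i =
      ∑ j ∈ Finset.range (p.natDegree + 1), p.coeff j * g (i + j) := by
  simp [aeval_eq_sum_range, cyclicShift_pow_apply]

theorem aeval_cyclicShift_eq_zero_iff {f : R[X]} (hf : f.Monic) (g : ZMod n → R) :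
    aeval (cyclicShift R n) f g = 0 ↔
      ∀ i, g (i + f.natDegree) = -∑ j ∈ Finset.range f.natDegree, f.coeff j * g (i + j) := by
  simp only [funext_iff, Pi.zero_apply, aeval_cyclicShift_apply, Finset.sum_range_succ,
    hf.coeff_natDegree, one_mul, eq_neg_iff_add_eq_zero, add_comm (g _)]

theorem cyclicShift_pow_mem_ker_aeval (p : R[X]) (k : ℕ) {g : ZMod n → R}
    (hg : g ∈ LinearMap.ker (aeval (cyclicShift R n) p)) :
    (cyclicShift R n ^ k) g ∈ LinearMap.ker (aeval (cyclicShift R n) p) := by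
  have hcomm := ((Commute.all p (X ^ k)).map (aeval (cyclicShift R n))).eq
  rw [map_pow, aeval_X] at hcomm
  rw [LinearMap.mem_ker] at hg ⊢
  rw [← Module.End.mul_apply, hcomm, Module.End.mul_apply, hg, map_zero]

theorem eq_zero_of_aeval_cyclicShift_eq_zero [NeZero n] {f : R[X]} (hf : f.Monic)
    {g : ZMod n → R} (hg : aeval (cyclicShift R n) f g = 0)
    (h₀ : ∀ j < f.natDegree, g j = 0) : g = 0 := by
  let E : LinearRecurrence R := ⟨f.natDegree, fun j => -f.coeff j⟩
  have hsol : E.IsSolution (g ∘ Nat.cast) := fun k => by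
    have hrec := (aeval_cyclicShift_eq_zero_iff hf g).1 hg k
    simp only [Function.comp_apply, Nat.cast_add]
    rw [Fin.sum_univ_eq_sum_range (fun j => -f.coeff j * g (k + j)), hrec]
    simp only [neg_mul, Finset.sum_neg_distrib]
    rfl
  have hzero : g ∘ Nat.cast = 0 :=
    (E.eq_iff_eqOn_range_order _ _ hsol fun k => by simp [E]).2
      fun j hj => h₀ j (Finset.mem_range.1 hj)
  funext i
  simpa using congrFun hzero i.val

theorem card_ker_aeval_cyclicShift_le [Finite R] [NeZero n] {f : R[X]} (hf : f.Monic) :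
    Nat.card (LinearMap.ker (aeval (cyclicShift R n) f)) ≤ Nat.card R ^ f.natDegree := by
  let init : LinearMap.ker (aeval (cyclicShift R n) f) → Fin f.natDegree → R :=
    fun g j => (g : ZMod n → R) j
  have hinit : Function.Injective init := by
    intro g h hgh
    have hsub := eq_zero_of_aeval_cyclicShift_eq_zero hf (g - h).2
      fun j hj => by simpa [init, sub_eq_zero] using congrFun hgh ⟨j, hj⟩
    exact sub_eq_zero.1 (Subtype.ext hsub)
  simpa [Nat.card_fun] using Nat.card_le_card_of_injective init hinit

end CyclicShift

theorem Polynomial.dvd_of_aeval_eq_zero_of_irreducible {K M : Type*} [Field K] [AddCommGroup M]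
    [Module K M] (T : Module.End K M) {f p : K[X]} (hf : Irreducible f) {v : M} (hv : v ≠ 0)
    (hfv : aeval T f v = 0) (hpv : aeval T p v = 0) : f ∣ p := by
  by_contra hfp
  exact hv <| Submodule.disjoint_def.1
    (disjoint_ker_aeval_of_isCoprime T (hf.coprime_iff_not_dvd.2 hfp)) v hfv hpv

theorem ZMod.eq_one_of_ne_zero (u : ZMod 2) (hu : u ≠ 0) : u = 1 := by
  decide +revert

theorem ZMod.neg_one_pow_val_add_val (u v : ZMod 2) :
    (-1 : ℤ) ^ (u.val + v.val) = (-1) ^ (u + v).val := by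
  decide +revert

theorem ZMod.neg_one_pow_val_add_one (u : ZMod 2) : (-1 : ℤ) ^ (u + 1).val = -(-1) ^ u.val := by
  decide +revert

theorem sum_neg_one_pow_val_eq_zero {G : Type*} [AddCommGroup G] [Fintype G] (ℓ : G →+ ZMod 2)
    (hℓ : ℓ ≠ 0) : ∑ g, (-1 : ℤ) ^ (ℓ g).val = 0 := by
  obtain ⟨g₀, hg₀⟩ := DFunLike.ne_iff.1 hℓ
  have hsum := Equiv.sum_comp (Equiv.addRight g₀) fun g => (-1 : ℤ) ^ (ℓ g).val
  simp only [Equiv.coe_addRight, map_add, ZMod.eq_one_of_ne_zero _ hg₀,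
    ZMod.neg_one_pow_val_add_one, Finset.sum_neg_distrib] at hsum
  linarith

theorem IsPrimitivePoly.monic {f : (ZMod 2)[X]} (hf : IsPrimitivePoly f) : f.Monic :=
  ZMod.eq_one_of_ne_zero _ (leadingCoeff_ne_zero.2 hf.1.ne_zero)

section MSequence

variable {n : ℕ} [NeZero n] {f : (ZMod 2)[X]} {φ : ZMod n → ZMod 2}

local notation "T" => cyclicShift (ZMod 2) n

theorem injective_cyclicShift_pow_val (hf : IsPrimitivePoly f) (hn : n = 2 ^ f.natDegree - 1)
    (hφ : φ ∈ LinearMap.ker (aeval T f)) (hφ₀ : φ ≠ 0) :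
    Function.Injective fun k : ZMod n => (T ^ k.val) φ := by
  intro a b hab
  by_contra hne
  have hd : 0 < (a - b).val := ZMod.val_pos.2 (sub_ne_zero.2 hne)
  have hperiod : (T ^ (a - b).val) φ = φ := funext fun i => by
    have hi := congrFun hab (i - b)
    simp only [cyclicShift_pow_val_apply, sub_add_cancel] at hi
    rw [cyclicShift_pow_val_apply, ← hi]
    abel_nf
  refine hf.2.2 _ hd (hn ▸ ZMod.val_lt _) <|
    dvd_of_aeval_eq_zero_of_irreducible T hf.1 hφ₀ hφ ?_
  simp [hperiod]

noncomputable def shiftOrZero (hφ : φ ∈ LinearMap.ker (aeval T f)) (o : Option (ZMod n)) :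
    LinearMap.ker (aeval T f) :=
  o.elim 0 fun k => ⟨(T ^ k.val) φ, cyclicShift_pow_mem_ker_aeval f _ hφ⟩

theorem bijective_shiftOrZero (hf : IsPrimitivePoly f) (hn : n = 2 ^ f.natDegree - 1)
    (hφ : φ ∈ LinearMap.ker (aeval T f)) (hφ₀ : φ ≠ 0) :
    Function.Bijective (shiftOrZero hφ) := by
  have hshift_inj := injective_cyclicShift_pow_val hf hn hφ hφ₀
  have hshift_ne : ∀ k : ZMod n, (T ^ k.val) φ ≠ 0 := fun k h => hφ₀ <| funext fun i => by
    simpa [cyclicShift_pow_val_apply] using congrFun h (i - k)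
  have hinj : Function.Injective (shiftOrZero hφ) := by
    rintro (_ | a) (_ | b) hab
    · rfl
    · exact absurd (congrArg Subtype.val hab).symm (hshift_ne b)
    · exact absurd (congrArg Subtype.val hab) (hshift_ne a)
    · exact congrArg some (hshift_inj (congrArg Subtype.val hab))
  refine (Nat.bijective_iff_injective_and_card _).2 ⟨hinj, le_antisymm ?_ ?_⟩
  · exact Nat.card_le_card_of_injective _ hinj
  · calc Nat.card (LinearMap.ker (aeval T f)) ≤ 2 ^ f.natDegree := by
          simpa using card_ker_aeval_cyclicShift_le hf.monic (n := n)
      _ = Nat.card (Option (ZMod n)) := by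
          have : 1 ≤ 2 ^ f.natDegree := Nat.one_le_two_pow
          rw [Finite.card_option, Nat.card_zmod, hn]
          omega

theorem sum_neg_one_pow_val_eq_neg_one (hf : IsPrimitivePoly f)
    (hn : n = 2 ^ f.natDegree - 1) (hφ : φ ∈ LinearMap.ker (aeval T f)) (hφ₀ : φ ≠ 0) :
    ∑ i, (-1 : ℤ) ^ (φ i).val = -1 := by
  classical
  let ev₀ : LinearMap.ker (aeval T f) →+ ZMod 2 :=
    (LinearMap.proj 0 ∘ₗ (LinearMap.ker (aeval T f)).subtype).toAddMonoidHom
  have hev₀ : ev₀ ≠ 0 := by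
    obtain ⟨k, hk⟩ := Function.ne_iff.1 hφ₀
    refine DFunLike.ne_iff.2 ⟨shiftOrZero hφ (some k), ?_⟩
    simpa [ev₀, shiftOrZero, cyclicShift_pow_val_apply] using hk
  have hsum := sum_neg_one_pow_val_eq_zero ev₀ hev₀
  rw [← Fintype.sum_bijective _ (bijective_shiftOrZero hf hn hφ hφ₀) _ _ fun _ => rfl,
    Fintype.sum_option] at hsum
  simp only [ev₀, shiftOrZero, Option.elim_none, Option.elim_some, LinearMap.toAddMonoidHom_coe,
    LinearMap.coe_comp, LinearMap.coe_proj, Submodule.coe_subtype, Function.comp_apply,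
    Function.eval, ZeroMemClass.coe_zero, Pi.zero_apply, ZMod.val_zero, pow_zero,
    cyclicShift_pow_val_apply, zero_add] at hsum
  linarith

theorem exists_add_shift_eq_shift (hf : IsPrimitivePoly f) (hn : n = 2 ^ f.natDegree - 1)
    (hφ : φ ∈ LinearMap.ker (aeval T f)) (hφ₀ : φ ≠ 0) {a : ZMod n} (ha : a ≠ 0) :
    ∃ k, ∀ i, φ i + φ (i + a) = φ (i + k) := by
  have hmem : φ + (T ^ a.val) φ ∈ LinearMap.ker (aeval T f) :=
    add_mem hφ (cyclicShift_pow_mem_ker_aeval f _ hφ)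
  obtain ⟨_ | k, hk⟩ := (bijective_shiftOrZero hf hn hφ hφ₀).2 ⟨_, hmem⟩
  · refine absurd (injective_cyclicShift_pow_val hf hn hφ hφ₀ ?_) ha
    have hzero := congrArg Subtype.val hk
    simp only [shiftOrZero, Option.elim_none, ZeroMemClass.coe_zero] at hzero
    simpa using (funext fun i => CharTwo.add_eq_zero.1 (congrFun hzero i).symm).symm
  · refine ⟨k, fun i => ?_⟩
    simpa [shiftOrZero, cyclicShift_pow_val_apply] using (congrFun (congrArg Subtype.val hk) i).symm

end MSequence

theorem mseq_autocorrelation_general (m n : ℕ) (hn : n = 2 ^ m - 1) [NeZero n]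
    (φ : ZMod n → ZMod 2) (hφ : IsMSequence m n φ) (a : ZMod n) :
    ∑ i : ZMod n, ((-1 : ℤ) ^ ((φ i).val + (φ (i + a)).val)) =
      if a = 0 then (n : ℤ) else -1 := by
  obtain ⟨hφ₀, f, hf, rfl, hrec⟩ := hφ
  have hφ : φ ∈ LinearMap.ker (aeval (cyclicShift (ZMod 2) n) f) := by
    rw [LinearMap.mem_ker, aeval_cyclicShift_eq_zero_iff hf.monic]
    simpa only [ZMod.neg_eq_self_mod_two] using hrec
  simp_rw [ZMod.neg_one_pow_val_add_val]
  split_ifs with ha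
  · simp [ha, CharTwo.add_self_eq_zero, ZMod.card]
  · obtain ⟨k, hk⟩ := exists_add_shift_eq_shift hf hn hφ hφ₀ ha
    simp_rw [hk]
    exact (Fintype.sum_equiv (Equiv.addRight k) _ _ fun _ => rfl).trans
      (sum_neg_one_pow_val_eq_neg_one hf hn hφ hφ₀)

/-- Autocorrelation of an m-sequence is two-valued: it equals `n` at shift `0`
and `−1` at every nonzero shift. -/
theorem mseq_autocorrelation (m n : ℕ) (hm : 3 ≤ m) (hn : n = 2 ^ m - 1) [NeZero n]
    (φ : ZMod n → ZMod 2) (hφ : IsMSequence m n φ) (a : ZMod n) :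
    ∑ i : ZMod n, ((-1 : ℤ) ^ ((φ i).val + (φ (i + a)).val)) =
      if a = 0 then (n : ℤ) else -1 :=
  mseq_autocorrelation_general m n hn φ hφ a
end

section
/- Let n = 2^m − 1 with n ≥ 4 (equivalently m ≥ 3), and let B be the binary Hamming code of length n generated by a primitive polynomial f of degree m, i.e., B = {c ∈ GF(2)^n : f(x) divides c(x)}. Then the set D of palindromic codewords of B (codewords c with c_i = c_{n−1−i} for all i) is a linear subcode of dimension (n+1)/2 − m. -/
open Polynomial

/-!
Codewords are the polynomials of degree `≤ n - 1`, palindromes those fixed by `reflect (n - 1)`.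
If `f ∣ c` for a palindrome `c`, then also `f.reverse ∣ c`. For a primitive `f` of degree
`m ≥ 3`, `f` does not divide `f.reverse`: otherwise `α⁻¹ = α ^ (n - 1)` would be a root of `f`
besides the `m` distinct conjugates `α ^ 2 ^ j`, where `α` is a root of `f` of order `n`.
Hence the palindromic codewords are exactly `g * q` with `g = f * f.reverse` (a palindrome of
degree `2m`) and `q` a palindrome of degree `≤ n - 1 - 2m`, and palindromes of degree `≤ N` are
freely determined by their coefficients `0, …, N / 2`.
-/

namespace Polynomial

section Semiring

variable {R : Type*} [Semiring R]

variable (R) in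
def palindromes (N : ℕ) : Submodule R R[X] where
  carrier := {p | p.natDegree ≤ N ∧ reflect N p = p}
  add_mem' := fun ⟨hp, hp'⟩ ⟨hq, hq'⟩ =>
    ⟨natDegree_add_le_of_degree_le hp hq, by rw [reflect_add, hp', hq']⟩
  zero_mem' := ⟨by simp, reflect_zero⟩
  smul_mem' c p := fun ⟨hp, hp'⟩ =>
    ⟨(natDegree_smul_le c p).trans hp, by rw [smul_eq_C_mul, reflect_C_mul, hp']⟩

theorem mem_palindromes {N : ℕ} {p : R[X]} :
    p ∈ palindromes R N ↔ p.natDegree ≤ N ∧ reflect N p = p := by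
  rfl

theorem mul_mem_palindromes {g q : R[X]} {k d : ℕ}
    (hg : g ∈ palindromes R k) (hq : q ∈ palindromes R d) : g * q ∈ palindromes R (k + d) :=
  ⟨natDegree_mul_le.trans (add_le_add hg.1 hq.1), by rw [reflect_mul g q hg.1 hq.1, hg.2, hq.2]⟩

def foldIndex (N j : ℕ) : Fin (N / 2 + 1) := ⟨min j (N - j), by omega⟩

variable (R) in
noncomputable def palindromize (N : ℕ) : (Fin (N / 2 + 1) → R) →ₗ[R] R[X] :=
  ∑ j ∈ Finset.range (N + 1), (LinearMap.proj (foldIndex N j)).smulRight (X ^ j)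

theorem coeff_palindromize {N : ℕ} (a : Fin (N / 2 + 1) → R) (t : ℕ) :
    (palindromize R N a).coeff t = if t ≤ N then a (foldIndex N t) else 0 := by
  simp [palindromize, coeff_X_pow]

theorem palindromize_mem_palindromes {N : ℕ} (a : Fin (N / 2 + 1) → R) :
    palindromize R N a ∈ palindromes R N := by
  refine ⟨natDegree_le_iff_coeff_eq_zero.mpr fun t ht => ?_, ?_⟩
  · rw [coeff_palindromize, if_neg (by omega)]
  · ext t
    rw [coeff_reflect]
    rcases le_or_gt t N with ht | ht
    · rw [revAt_le ht, coeff_palindromize, coeff_palindromize, if_pos (Nat.sub_le N t), if_pos ht]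
      congr 1
      ext
      simp only [foldIndex]
      omega
    · rw [revAt_eq_self_of_lt ht]

theorem palindromize_injective (N : ℕ) : Function.Injective (palindromize R N) := by
  intro a b hab
  funext i
  have hi : foldIndex N i = i := by ext; simp only [foldIndex]; omega
  simpa [coeff_palindromize, hi, show (i : ℕ) ≤ N by omega] using congr_arg (coeff · i) hab

theorem range_palindromize (N : ℕ) : LinearMap.range (palindromize R N) = palindromes R N := by
  refine le_antisymm (LinearMap.range_le_iff_comap.mpr ?_) fun p ⟨hp, hrefl⟩ => ?_
  · exact Submodule.eq_top_iff'.mpr palindromize_mem_palindromes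
  refine ⟨fun i => p.coeff i, ?_⟩
  ext t
  rw [coeff_palindromize]
  split_ifs with ht
  · rcases le_total t (N - t) with h | h
    · simp [foldIndex, min_eq_left h]
    · conv_rhs => rw [← hrefl, coeff_reflect, revAt_le ht]
      simp [foldIndex, min_eq_right h]
  · exact (coeff_eq_zero_of_natDegree_lt (by omega)).symm

theorem mem_palindromes_pred_iff {n : ℕ} {p : R[X]} (hp : p ∈ degreeLT R n) :
    p ∈ palindromes R (n - 1) ↔ ∀ i j : Fin n, (i : ℕ) + j = n - 1 → p.coeff i = p.coeff j := by
  have hcoeff (t : ℕ) (ht : n ≤ t) : p.coeff t = 0 :=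
    coeff_eq_zero_of_degree_lt ((mem_degreeLT.mp hp).trans_le (by exact_mod_cast ht))
  rw [mem_palindromes, and_iff_right (natDegree_le_iff_coeff_eq_zero.mpr fun t ht =>
    hcoeff t (by omega))]
  constructor
  · intro h i j hij
    conv_lhs => rw [← h, coeff_reflect, revAt_le (by omega)]
    congr 1
    omega
  · intro h
    ext t
    rw [coeff_reflect]
    rcases lt_or_ge t n with ht | ht
    · rw [revAt_le (by omega)]
      exact h ⟨n - 1 - t, by omega⟩ ⟨t, ht⟩ (by simp only; omega)
    · rw [hcoeff t ht]
      refine hcoeff _ ?_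
      rcases le_or_gt t (n - 1) with h' | h'
      · rw [revAt_le h']; omega
      · rw [revAt_eq_self_of_lt h']; exact ht

theorem coeff_degreeLTEquiv_symm {n : ℕ} (c : Fin n → R) (i : Fin n) :
    ((degreeLTEquiv R n).symm c : R[X]).coeff i = c i :=
  congr_fun ((degreeLTEquiv R n).apply_symm_apply c) i

theorem coe_degreeLTEquiv_symm {n : ℕ} (c : Fin n → R) :
    ((degreeLTEquiv R n).symm c : R[X]) = ∑ i, C (c i) * X ^ (i : ℕ) := by
  rw [← Module.Basis.equivFun_ofEquivFun (degreeLTEquiv R n), Module.Basis.equivFun_symm_apply]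
  simp [← degreeLT.basis.eq_def, smul_eq_C_mul]

theorem sum_C_mul_X_pow_mem_palindromes_iff {n : ℕ} (c : Fin n → R) :
    ∑ i : Fin n, C (c i) * X ^ (i : ℕ) ∈ palindromes R (n - 1) ↔
      ∀ i j : Fin n, (i : ℕ) + j = n - 1 → c i = c j := by
  rw [← coe_degreeLTEquiv_symm, mem_palindromes_pred_iff (Subtype.prop _)]
  simp only [coeff_degreeLTEquiv_symm]

theorem exists_submodule_coe_eq_sum_mem {n : ℕ} {S : Submodule R R[X]} (hS : S ≤ degreeLT R n) :
    ∃ W : Submodule R (Fin n → R),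
      (W : Set (Fin n → R)) = {c | ∑ i : Fin n, C (c i) * X ^ (i : ℕ) ∈ S} ∧
        Module.finrank R W = Module.finrank R S := by
  refine ⟨(S.comap (degreeLT R n).subtype).map (degreeLTEquiv R n).toLinearMap, ?_, ?_⟩
  · ext c
    rw [SetLike.mem_coe, Submodule.mem_map_equiv, Submodule.mem_comap, Submodule.subtype_apply,
      coe_degreeLTEquiv_symm]
    rfl
  · rw [LinearEquiv.finrank_map_eq, (Submodule.comapSubtypeEquivOfLe hS).finrank_eq]

theorem natDegree_reverse_of_coeff_zero_ne_zero {f : R[X]} (hf : f.coeff 0 ≠ 0) :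
    f.reverse.natDegree = f.natDegree := by
  rw [reverse_natDegree, natTrailingDegree_eq_zero.mpr (.inr hf), Nat.sub_zero]

theorem reverse_reverse_of_coeff_zero_ne_zero {f : R[X]} (hf : f.coeff 0 ≠ 0) :
    f.reverse.reverse = f := by
  rw [reverse, natDegree_reverse_of_coeff_zero_ne_zero hf]
  exact reflect_reflect

variable [NoZeroDivisors R]

theorem natDegree_mul_reverse {f : R[X]} (hf : f.coeff 0 ≠ 0) :
    (f * f.reverse).natDegree = f.natDegree + f.natDegree := by
  have hf0 : f ≠ 0 := fun h => hf (by rw [h, coeff_zero])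
  rw [natDegree_mul hf0 (mt reverse_eq_zero.mp hf0), natDegree_reverse_of_coeff_zero_ne_zero hf]

theorem reverse_dvd_of_mem_palindromes {f p : R[X]} {N : ℕ} (hp : p ∈ palindromes R N)
    (hf : f ∣ p) : f.reverse ∣ p := by
  obtain ⟨q, rfl⟩ := hf
  rcases eq_or_ne (f * q) 0 with h | h
  · rw [h]; exact dvd_zero _
  have hdeg := natDegree_mul (left_ne_zero_of_mul h) (right_ne_zero_of_mul h)
  obtain ⟨e, rfl⟩ : ∃ e, N = f.natDegree + e := ⟨N - f.natDegree, by have := hp.1; omega⟩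
  have hq : q.natDegree ≤ e := by have := hp.1; omega
  refine ⟨reflect e q, ?_⟩
  conv_lhs => rw [← hp.2, reflect_mul f q le_rfl hq]
  rfl

end Semiring

theorem reverse_mul_reverse {R : Type*} [CommSemiring R] [NoZeroDivisors R] {f : R[X]}
    (hf : f.coeff 0 ≠ 0) : (f * f.reverse).reverse = f * f.reverse := by
  rw [reverse_mul_of_domain, reverse_reverse_of_coeff_zero_ne_zero hf, mul_comm]

theorem finrank_palindromes (K : Type*) [Field K] (N : ℕ) :
    Module.finrank K (palindromes K N) = N / 2 + 1 := by
  rw [← range_palindromize, LinearMap.finrank_range_of_inj (palindromize_injective N),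
    Module.finrank_fin_fun]

theorem map_mulLeft_palindromes {R : Type*} [CommRing R] [IsDomain R] {g : R[X]} (hg0 : g ≠ 0)
    (hg : g.reverse = g) (d : ℕ) :
    (palindromes R d).map (LinearMap.mulLeft R g) =
      palindromes R (g.natDegree + d) ⊓ (Ideal.span {g}).restrictScalars R := by
  ext p
  simp only [Submodule.mem_map, LinearMap.mulLeft_apply, Submodule.mem_inf,
    Submodule.restrictScalars_mem, Ideal.mem_span_singleton]
  constructor
  · rintro ⟨q, hq, rfl⟩
    exact ⟨mul_mem_palindromes ⟨le_rfl, hg⟩ hq, dvd_mul_right g q⟩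
  · rintro ⟨hp, q, rfl⟩
    rcases eq_or_ne q 0 with rfl | hq0
    · exact ⟨0, zero_mem _, rfl⟩
    have hq : q.natDegree ≤ d := by have := hp.1; rw [natDegree_mul hg0 hq0] at this; omega
    refine ⟨q, ⟨hq, mul_left_cancel₀ hg0 ?_⟩, rfl⟩
    conv_rhs => rw [← hp.2, reflect_mul g q le_rfl hq]
    rw [← reverse, hg]

section Field

variable {K : Type*} [Field K]

theorem finrank_palindromes_inf_span {g : K[X]} (hg0 : g ≠ 0) (hg : g.reverse = g) {N : ℕ}
    (hN : g.natDegree ≤ N) :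
    Module.finrank K ↥(palindromes K N ⊓ (Ideal.span {g}).restrictScalars K) =
      (N - g.natDegree) / 2 + 1 := by
  obtain ⟨d, rfl⟩ := Nat.exists_eq_add_of_le hN
  rw [← map_mulLeft_palindromes hg0 hg, Nat.add_sub_cancel_left, ← finrank_palindromes K d]
  exact (Submodule.equivMapOfInjective _ (mul_right_injective₀ hg0) _).finrank_eq.symm

theorem palindromes_inf_span_eq_mul_reverse {f : K[X]} (hf : Irreducible f)
    (hfr : ¬ f ∣ f.reverse) (N : ℕ) :
    palindromes K N ⊓ (Ideal.span {f}).restrictScalars K =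
      palindromes K N ⊓ (Ideal.span {f * f.reverse}).restrictScalars K := by
  ext p
  simp only [Submodule.mem_inf, Submodule.restrictScalars_mem, Ideal.mem_span_singleton]
  refine ⟨fun ⟨hp, hfp⟩ => ⟨hp, ?_⟩, fun ⟨hp, hgp⟩ => ⟨hp, dvd_of_mul_right_dvd hgp⟩⟩
  exact (hf.coprime_iff_not_dvd.mpr hfr).mul_dvd hfp (reverse_dvd_of_mem_palindromes hp hfp)

end Field

theorem aeval_reverse_eq_zero_iff {R A : Type*} [CommSemiring R] [CommSemiring A] [Algebra R A]
    {x y : A} (h : x * y = 1) (f : R[X]) : aeval y f.reverse = 0 ↔ aeval x f = 0 :=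
  let _ : Invertible x := ⟨y, mul_comm y x ▸ h, h⟩
  eval₂_reverse_eq_zero_iff (algebraMap R A) x f

theorem card_le_natDegree_of_aeval_eq_zero {K A : Type*} [Field K] [CommRing A] [IsDomain A]
    [Algebra K A] {f : K[X]} (hf : f ≠ 0) {s : Finset A} (hs : ∀ x ∈ s, aeval x f = 0) :
    s.card ≤ f.natDegree := by
  rw [← natDegree_map (algebraMap K A)]
  exact card_le_degree_of_subset_roots fun x hx => mem_aroots.mpr ⟨hf, hs x (Finset.mem_val.mp hx)⟩

theorem aeval_pow_char_pow_eq_zero {p : ℕ} [Fact p.Prime] {A : Type*} [CommSemiring A]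
    [Algebra (ZMod p) A] {f : (ZMod p)[X]} {x : A} (hx : aeval x f = 0) (j : ℕ) :
    aeval (x ^ p ^ j) f = 0 := by
  induction j with
  | zero => simpa using hx
  | succ j ih =>
    rw [pow_succ, pow_mul, ← expand_aeval, ZMod.expand_card, map_pow, ih,
      zero_pow (Fact.out : p.Prime).ne_zero]

end Polynomial

theorem AdjoinRoot.root_pow_eq_one_iff_dvd {R : Type*} [CommRing R] {f : R[X]} {k : ℕ} :
    root f ^ k = 1 ↔ f ∣ X ^ k - 1 := by
  rw [← sub_eq_zero, ← mk_eq_zero, map_sub, map_pow, mk_X, map_one]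

namespace IsPrimitivePoly

variable {f : (ZMod 2)[X]}

theorem coeff_zero_ne_zero (hf : IsPrimitivePoly f) : f.coeff 0 ≠ 0 := by
  intro h0
  have hn : 2 ^ f.natDegree - 1 ≠ 0 := by
    have := Nat.one_lt_two_pow hf.1.natDegree_pos.ne'; omega
  have := X_dvd_iff.mp ((X_dvd_iff.mpr h0).trans hf.2.1)
  simp [Ne.symm hn] at this

theorem not_dvd_reverse (hf : IsPrimitivePoly f) (hm : 3 ≤ f.natDegree) : ¬ f ∣ f.reverse := by
  intro hdvd
  have : Fact (Irreducible f) := ⟨hf.1⟩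
  set m := f.natDegree
  set α := AdjoinRoot.root f
  have hord : orderOf α = 2 ^ m - 1 := hf.orderOf_root
  have h8 : 8 ≤ 2 ^ m := Nat.pow_le_pow_right two_pos hm
  have hsmall : ∀ j < m, 2 * 2 ^ j ≤ 2 ^ m := fun j hj => by
    rw [← pow_succ']; exact Nat.pow_le_pow_right two_pos hj
  -- the exponents of `α⁻¹ = α ^ (n - 1)` and of the conjugates `α ^ 2 ^ j`
  let E : Finset ℕ := insert (2 ^ m - 2) ((Finset.range m).image (2 ^ ·))
  have hE : E.card = m + 1 := by
    rw [Finset.card_insert_of_notMem,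
      Finset.card_image_of_injective _ (Nat.pow_right_injective le_rfl), Finset.card_range]
    simp only [Finset.mem_image, Finset.mem_range, not_exists, not_and]
    intro j hj h
    have := hsmall j hj
    omega
  have hE_lt : ∀ k ∈ E, k < orderOf α := by
    simp only [E, hord, Finset.forall_mem_insert, Finset.forall_mem_image, Finset.mem_range]
    exact ⟨by omega, fun j hj => by have := hsmall j hj; omega⟩
  have hroot : ∀ k ∈ E, aeval (α ^ k) f = 0 := by
    have hα : aeval α f = 0 := by rw [AdjoinRoot.aeval_eq, AdjoinRoot.mk_self]
    simp only [E, Finset.forall_mem_insert, Finset.forall_mem_image, Finset.mem_range]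
    refine ⟨?_, fun j _ => aeval_pow_char_pow_eq_zero hα j⟩
    have hinv : α ^ (2 ^ m - 2) * α = 1 := by
      rw [← pow_succ, show 2 ^ m - 2 + 1 = 2 ^ m - 1 by omega, ← hord, pow_orderOf_eq_one]
    rw [← aeval_reverse_eq_zero_iff hinv, AdjoinRoot.aeval_eq, AdjoinRoot.mk_eq_zero]
    exact hdvd
  have := card_le_natDegree_of_aeval_eq_zero hf.1.ne_zero (s := E.image (α ^ ·))
    (by simpa using hroot)
  rw [Finset.card_image_of_injOn (pow_injOn_Iio_orderOf.mono hE_lt), hE] at this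
  omega

end IsPrimitivePoly

/-- The palindromic codewords of the binary Hamming code of length `n = 2^m − 1`
(generated by a primitive polynomial `f` of degree `m`, `m ≥ 3`) form a linear
subcode of dimension `(n+1)/2 − m`. -/
theorem palindrome_subcode_dim (m n : ℕ) (hm : 3 ≤ m) (hn : n = 2 ^ m - 1)
    (f : Polynomial (ZMod 2)) (hf : IsPrimitivePoly f) (hdeg : f.natDegree = m) :
    ∃ W : Submodule (ZMod 2) (Fin n → ZMod 2),
      (W : Set (Fin n → ZMod 2)) =
        {c | f ∣ (∑ i : Fin n, Polynomial.C (c i) * X ^ (i : ℕ)) ∧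
          ∀ i j : Fin n, (i : ℕ) + (j : ℕ) = n - 1 → c i = c j} ∧
      Module.finrank (ZMod 2) W = (n + 1) / 2 - m := by
  -- `2 ^ m ≥ 4 * (m - 1) ≥ 2 * m + 2`, so a codeword has room for the factor `f * f.reverse`
  have hpow : 2 ^ m = 2 ^ 2 * 2 ^ (m - 2) := by rw [← pow_add]; congr 1; omega
  have hlt := Nat.lt_two_pow_self (n := m - 2)
  have hS : palindromes (ZMod 2) (n - 1) ⊓ (Ideal.span {f}).restrictScalars (ZMod 2) ≤
      degreeLT (ZMod 2) n := fun p hp =>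
    mem_degreeLT.mpr (degree_le_natDegree.trans_lt (by have := hp.1.1; norm_cast; omega))
  obtain ⟨W, hW, hrank⟩ := exists_submodule_coe_eq_sum_mem hS
  refine ⟨W, hW.trans ?_, hrank.trans ?_⟩
  · ext c
    rw [Set.mem_ofPred_eq, Submodule.mem_inf, sum_C_mul_X_pow_mem_palindromes_iff,
      Submodule.restrictScalars_mem, Ideal.mem_span_singleton, and_comm]
    rfl
  · have hc0 := hf.coeff_zero_ne_zero
    have hf0 := hf.1.ne_zero
    have hg := natDegree_mul_reverse hc0
    rw [palindromes_inf_span_eq_mul_reverse hf.1 (hf.not_dvd_reverse (hdeg ▸ hm)),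
      finrank_palindromes_inf_span (mul_ne_zero hf0 (mt reverse_eq_zero.mp hf0))
        (reverse_mul_reverse hc0) (by omega), hg]
    omega
end

section
/- Let f be an irreducible polynomial over GF(2) of degree m ≥ 3 that is not self-reciprocal, and let c ∈ GF(2)[x] with deg c ≤ n−1 satisfy c(x) = x^{n−1} c(1/x) (palindrome of length n) and f(x) | c(x). Then f(x)·f̂(x) divides c(x), where f̂(x) = x^m f(1/x) is the reciprocal polynomial. -/
open Polynomial

/-!
Reflecting a factorisation `c = f * g` with `deg c ≤ n - 1` gives `x^{n-1} c(1/x) = f̂ * g'` for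
the reflection `g'` of `g`, so a palindrome divisible by `f` is also divisible by `f̂`.
Over `GF(2)` every nonzero polynomial is monic, so `f ∣ f̂` would force `f̂ = f` by comparing
degrees; hence the irreducible `f` is coprime to `f̂`, and both divide `c`.
-/

namespace Polynomial

theorem reverse_dvd_reflect_of_dvd {R : Type*} [Semiring R] [NoZeroDivisors R] {f c : R[X]}
    {N : ℕ} (hc : c.natDegree ≤ N) (hfc : f ∣ c) : f.reverse ∣ reflect N c := by
  obtain ⟨g, rfl⟩ := hfc
  rcases eq_or_ne (f * g) 0 with hfg | hfg
  · simp [hfg]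
  obtain ⟨hf, hg⟩ := mul_ne_zero_iff.mp hfg
  rw [natDegree_mul hf hg] at hc
  have hN : N = f.natDegree + (N - f.natDegree) := by omega
  rw [hN, reflect_mul f g le_rfl (by omega)]
  exact dvd_mul_right _ _

theorem monic_of_ne_zero_zmod_two_s10 {p : (ZMod 2)[X]} (hp : p ≠ 0) : p.Monic := by
  have eq_one_of_ne_zero : ∀ a : ZMod 2, a ≠ 0 → a = 1 := by decide
  exact eq_one_of_ne_zero _ (leadingCoeff_ne_zero.mpr hp)

theorem not_dvd_reverse_zmod_two {f : (ZMod 2)[X]} (hf : f ≠ 0) (hsr : f.reverse ≠ f) :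
    ¬ f ∣ f.reverse := fun hdvd =>
  hsr <| eq_of_monic_of_dvd_of_natDegree_le (monic_of_ne_zero_zmod_two_s10 hf)
    (monic_of_ne_zero_zmod_two_s10 (reverse_eq_zero.not.mpr hf)) hdvd (reverse_natDegree_le f)

end Polynomial

theorem palindrome_divisible_by_reciprocal_general (n : ℕ)
    (f : Polynomial (ZMod 2)) (hf : Irreducible f)
    (hsr : f.reverse ≠ f)
    (c : Polynomial (ZMod 2)) (hcdeg : c.natDegree ≤ n - 1)
    (hpal : Polynomial.reflect (n - 1) c = c) (hfc : f ∣ c) :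
    f * f.reverse ∣ c := by
  have hcop : IsCoprime f f.reverse :=
    hf.coprime_iff_not_dvd.mpr (not_dvd_reverse_zmod_two hf.ne_zero hsr)
  have hrev : f.reverse ∣ c := hpal ▸ reverse_dvd_reflect_of_dvd hcdeg hfc
  exact hcop.mul_dvd hfc hrev

/-- If `f` over `GF(2)` is irreducible of degree `m ≥ 3` and not self-reciprocal,
and `c` is a palindrome of length `n` (i.e. `deg c ≤ n−1` and `c(x) = x^{n−1} c(1/x)`)
divisible by `f`, then `c` is divisible by `f·f̂`, where `f̂(x) = x^m f(1/x)` is the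
reciprocal polynomial. -/
theorem palindrome_divisible_by_reciprocal (m n : ℕ) (hm : 3 ≤ m)
    (f : Polynomial (ZMod 2)) (hf : Irreducible f) (hdeg : f.natDegree = m)
    (hsr : f.reverse ≠ f)
    (c : Polynomial (ZMod 2)) (hcdeg : c.natDegree ≤ n - 1)
    (hpal : Polynomial.reflect (n - 1) c = c) (hfc : f ∣ c) :
    f * f.reverse ∣ c :=
  palindrome_divisible_by_reciprocal_general n f hf hsr c hcdeg hpal hfc
end

section
/- Let r be a fixed even positive integer. The number of closed walks of length r on the complete graph on n labeled vertices (with loops allowed) in which each traversed edge is traversed an even number of times and which visit exactly r/2 + 1 distinct vertices is C_{r/2}·n^{r/2+1} + O(n^{r/2}) as n → ∞, where C_k is the k-th Catalan number. -/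
/-!
Even edge multiplicities make a closed walk of length `2k` traverse at most `k` edges; visiting
`k + 1` vertices, it then traces a tree and crosses each of its `k` edges exactly twice, i.e. it is
a depth-first traversal of a plane tree with `k` edges. Such a walk is determined by the Dyck word
recording which steps discover a new vertex, together with the injective list of its vertices in
order of discovery, and every such pair arises. Hence the count is exactly
`C_k · n (n - 1) ⋯ (n - k)`, which is `C_k n^(k+1) + O(n^k)`.
-/

open Finset

namespace EvenWalk

variable {V W : Type*}

/-! ## Walks -/

section

variable [DecidableEq V]

def pathEdges : List V → Finset (Sym2 V)
  | [] => ∅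
  | [_] => ∅
  | a :: b :: l => insert s(a, b) (pathEdges (b :: l))

@[simp] lemma pathEdges_cons_cons (a b : V) (l : List V) :
    pathEdges (a :: b :: l) = insert s(a, b) (pathEdges (b :: l)) := rfl

lemma mem_of_mem_pathEdges {l : List V} {e : Sym2 V} (he : e ∈ pathEdges l) {x : V}
    (hx : x ∈ e) : x ∈ l := by
  match l, he with
  | a :: b :: l, he =>
    rcases Finset.mem_insert.1 he with rfl | he
    · rcases Sym2.mem_iff.1 hx with rfl | rfl <;> simp
    · exact List.mem_cons_of_mem a (mem_of_mem_pathEdges he hx)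

lemma pathEdges_eq_empty_iff {l : List V} : pathEdges l = ∅ ↔ l.length ≤ 1 := by
  match l with
  | [] | [_] => simp [pathEdges]
  | _ :: _ :: _ => simp

lemma eq_of_mem_pathEdges {a b : V} {l : List V} (hl : (a :: b :: l).Nodup) {e : Sym2 V}
    (he : e ∈ pathEdges (a :: b :: l)) (ha : a ∈ e) : e = s(a, b) := by
  rcases Finset.mem_insert.1 he with rfl | he
  · rfl
  · exact absurd (mem_of_mem_pathEdges he ha) (List.nodup_cons.1 hl).1

section Walk

variable (w : ℕ → V)

def stepEdge (t : ℕ) : Sym2 V := s(w t, w (t + 1))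

def edgeCount (t : ℕ) (e : Sym2 V) : ℕ := #{s ∈ range t | stepEdge w s = e}

def visited (t : ℕ) : Finset V := (range (t + 1)).image w

def traversed (t : ℕ) : Finset (Sym2 V) := (range t).image (stepEdge w)

def freshStep (t : ℕ) : Bool := decide (w (t + 1) ∉ visited w t)

def cycleSteps (t : ℕ) : Finset ℕ :=
  {s ∈ range t | w (s + 1) ∈ visited w s ∧ stepEdge w s ∉ traversed w s}

lemma edgeCount_mono (e : Sym2 V) : Monotone (edgeCount w · e) := fun _ _ h =>
  card_le_card (filter_subset_filter _ (range_subset_range.2 h))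

variable {w}

@[simp] lemma edgeCount_zero (e : Sym2 V) : edgeCount w 0 e = 0 := by simp [edgeCount]

lemma edgeCount_succ (t : ℕ) (e : Sym2 V) :
    edgeCount w (t + 1) e = edgeCount w t e + if stepEdge w t = e then 1 else 0 := by
  simp only [edgeCount, range_add_one, filter_insert]
  split_ifs with h
  · rw [card_insert_of_notMem (by simp)]
  · rfl

lemma odd_edgeCount_succ_iff (t : ℕ) (e : Sym2 V) :
    Odd (edgeCount w (t + 1) e) ↔ (Odd (edgeCount w t e) ↔ stepEdge w t ≠ e) := by
  rw [edgeCount_succ]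
  split_ifs with h <;> simp [h, Nat.odd_add_one]

@[simp] lemma visited_zero : visited w 0 = {w 0} := by simp [visited]

lemma visited_succ (t : ℕ) : visited w (t + 1) = insert (w (t + 1)) (visited w t) := by
  rw [visited, range_add_one, image_insert, ← visited]

lemma mem_visited {t : ℕ} {x : V} : x ∈ visited w t ↔ ∃ s ≤ t, w s = x := by
  simp [visited]

lemma apply_mem_visited {s t : ℕ} (h : s ≤ t) : w s ∈ visited w t :=
  mem_visited.2 ⟨s, h, rfl⟩

lemma visited_mono : Monotone (visited w) := fun _ _ h =>
  image_subset_image (range_subset_range.2 (Nat.succ_le_succ h))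

@[simp] lemma traversed_zero : traversed w 0 = ∅ := by simp [traversed]

lemma traversed_succ (t : ℕ) :
    traversed w (t + 1) = insert (stepEdge w t) (traversed w t) := by
  rw [traversed, range_add_one, image_insert, ← traversed]

lemma mem_visited_of_mem_traversed {t : ℕ} {e : Sym2 V} (he : e ∈ traversed w t) {x : V}
    (hx : x ∈ e) : x ∈ visited w t := by
  obtain ⟨s, hs, rfl⟩ := mem_image.1 he
  rcases Sym2.mem_iff.1 hx with rfl | rfl
  · exact apply_mem_visited (by simp at hs; omega)
  · exact apply_mem_visited (by simp at hs; omega)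

lemma edgeCount_pos_iff {t : ℕ} {e : Sym2 V} : 0 < edgeCount w t e ↔ e ∈ traversed w t := by
  simp [edgeCount, traversed, Finset.card_pos, Finset.Nonempty]

lemma sum_edgeCount (t : ℕ) : ∑ e ∈ traversed w t, edgeCount w t e = t := by
  conv_rhs => rw [← card_range t,
    card_eq_sum_card_fiberwise (f := stepEdge w) fun s hs => mem_image_of_mem _ hs]
  rfl

/-- Euler's relation for the graph traced by the walk: every step adds an edge, and a vertex as
well unless it closes a cycle. -/
lemma card_traversed_add_one (t : ℕ) :
    #(traversed w t) + 1 = #(visited w t) + #(cycleSteps w t) := by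
  induction t with
  | zero => simp [cycleSteps]
  | succ t ih =>
    have hcyc : cycleSteps w (t + 1) =
        if w (t + 1) ∈ visited w t ∧ stepEdge w t ∉ traversed w t
        then insert t (cycleSteps w t) else cycleSteps w t := by
      simp only [cycleSteps, range_add_one, filter_insert]
    rw [hcyc, traversed_succ, visited_succ]
    by_cases hv : w (t + 1) ∈ visited w t
    · by_cases he : stepEdge w t ∈ traversed w t
      · simp [hv, he, ih]
      · rw [if_pos ⟨hv, he⟩, card_insert_of_notMem he, insert_eq_of_mem hv,
          card_insert_of_notMem (by simp [cycleSteps])]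
        omega
    · have he : stepEdge w t ∉ traversed w t := fun h =>
        hv (mem_visited_of_mem_traversed h (Sym2.mem_mk_right _ _))
      rw [if_neg (fun h => hv h.1), card_insert_of_notMem he, card_insert_of_notMem hv]
      omega

end Walk

structure IsEvenWalk (k : ℕ) (w : ℕ → V) : Prop where
  even_edgeCount : ∀ e, Even (edgeCount w (2 * k) e)
  card_visited : #(visited w (2 * k)) = k + 1

namespace IsEvenWalk

variable {k : ℕ} {w : ℕ → V} (hw : IsEvenWalk k w)
include hw

lemma two_le_edgeCount {e : Sym2 V} (he : e ∈ traversed w (2 * k)) :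
    2 ≤ edgeCount w (2 * k) e := by
  obtain ⟨j, hj⟩ := hw.even_edgeCount e
  have := edgeCount_pos_iff.2 he
  omega

lemma card_traversed_le : #(traversed w (2 * k)) ≤ k := by
  have := card_nsmul_le_sum _ _ 2 fun e he => hw.two_le_edgeCount he
  rw [sum_edgeCount, smul_eq_mul] at this
  omega

lemma cycleSteps_eq_empty : cycleSteps w (2 * k) = ∅ := by
  have := card_traversed_add_one (w := w) (2 * k)
  have := hw.card_traversed_le
  rw [hw.card_visited] at *
  exact card_eq_zero.1 (by omega)

lemma card_traversed : #(traversed w (2 * k)) = k := by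
  have := card_traversed_add_one (w := w) (2 * k)
  rw [hw.card_visited, hw.cycleSteps_eq_empty, card_empty] at this
  omega

lemma edgeCount_eq_two {e : Sym2 V} (he : e ∈ traversed w (2 * k)) :
    edgeCount w (2 * k) e = 2 := by
  by_contra hne
  have := sum_lt_sum (fun e he => hw.two_le_edgeCount he)
    ⟨e, he, lt_of_le_of_ne (hw.two_le_edgeCount he) (Ne.symm hne)⟩
  rw [sum_edgeCount, sum_const, hw.card_traversed, smul_eq_mul] at this
  omega

lemma edgeCount_stepEdge_eq_one {t : ℕ} (ht : t < 2 * k) (hv : w (t + 1) ∈ visited w t) :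
    edgeCount w t (stepEdge w t) = 1 := by
  have hmem : stepEdge w t ∈ traversed w t := by
    by_contra he
    have : t ∈ cycleSteps w (2 * k) := by simp [cycleSteps, ht, hv, he]
    simp [hw.cycleSteps_eq_empty] at this
  have hpos := edgeCount_pos_iff.2 hmem
  have hle : edgeCount w (t + 1) (stepEdge w t) ≤ 2 :=
    hw.edgeCount_eq_two (mem_image_of_mem _ (mem_range.2 ht)) ▸
      edgeCount_mono w _ (show t + 1 ≤ 2 * k by omega)
  rw [edgeCount_succ, if_pos rfl] at hle
  omega

end IsEvenWalk

end

/-! ## Stack runs -/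

def upCount (b : ℕ → Bool) (t : ℕ) : ℕ := #{s ∈ range t | b s}

@[simp] lemma upCount_zero (b : ℕ → Bool) : upCount b 0 = 0 := by simp [upCount]

lemma upCount_succ (b : ℕ → Bool) (t : ℕ) :
    upCount b (t + 1) = upCount b t + if b t then 1 else 0 := by
  simp only [upCount, range_add_one, filter_insert]
  split_ifs with h
  · rw [card_insert_of_notMem (by simp)]
  · rfl

lemma upCount_mono (b : ℕ → Bool) : Monotone (upCount b) := fun _ _ h =>
  card_le_card (filter_subset_filter _ (range_subset_range.2 h))

lemma upCount_congr {b b' : ℕ → Bool} {t : ℕ} (h : ∀ s < t, b s = b' s) :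
    upCount b t = upCount b' t := by
  unfold upCount
  congr 1
  exact filter_congr fun s hs => by rw [h s (mem_range.1 hs)]

/-- `S` is the stack of a depth-first traversal along `w`: at step `t` the walk goes down to a
vertex not on the stack if `b t`, and back up to the vertex below the top otherwise. -/
structure IsStackRun (b : ℕ → Bool) (w : ℕ → V) (S : ℕ → List V) (T : ℕ) : Prop where
  start : S 0 = [w 0]
  push : ∀ t < T, b t → w (t + 1) ∉ S t ∧ S (t + 1) = w (t + 1) :: S t
  pop : ∀ t < T, b t = false → ∃ r, S t = w t :: w (t + 1) :: r ∧ S (t + 1) = w (t + 1) :: r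

namespace IsStackRun

variable {b : ℕ → Bool} {w : ℕ → V} {S : ℕ → List V} {T : ℕ}

lemma mono (h : IsStackRun b w S T) {T' : ℕ} (hT : T' ≤ T) : IsStackRun b w S T' :=
  ⟨h.start, fun t ht => h.push t (by omega), fun t ht => h.pop t (by omega)⟩

lemma of_step (h0 : S 0 = [w 0])
    (hpush : ∀ t < T, IsStackRun b w S t → b t →
      w (t + 1) ∉ S t ∧ S (t + 1) = w (t + 1) :: S t)
    (hpop : ∀ t < T, IsStackRun b w S t → b t = false →
      ∃ r, S t = w t :: w (t + 1) :: r ∧ S (t + 1) = w (t + 1) :: r) :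
    IsStackRun b w S T := by
  suffices ∀ T' ≤ T, IsStackRun b w S T' from this T le_rfl
  intro T' hT'
  induction T' with
  | zero => exact ⟨h0, by simp, by simp⟩
  | succ T' ih =>
    have h := ih (by omega)
    refine ⟨h0, fun t ht => ?_, fun t ht => ?_⟩
    · exact if htT : t < T' then h.push t htT else hpush t (by omega) (h.mono (by omega))
    · exact if htT : t < T' then h.pop t htT else hpop t (by omega) (h.mono (by omega))

variable (h : IsStackRun b w S T)
include h

lemma exists_eq_cons {t : ℕ} (ht : t ≤ T) : ∃ r, S t = w t :: r := by
  cases t with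
  | zero => exact ⟨[], h.start⟩
  | succ t =>
    cases hb : b t
    · obtain ⟨r, -, hr⟩ := h.pop t ht hb
      exact ⟨r, hr⟩
    · exact ⟨S t, (h.push t ht hb).2⟩

lemma getLast?_eq {t : ℕ} (ht : t ≤ T) : (S t).getLast? = some (w 0) := by
  induction t with
  | zero => simp [h.start]
  | succ t ih =>
    cases hb : b t
    · obtain ⟨r, hr, hr'⟩ := h.pop t ht hb
      rw [hr', ← ih (by omega), hr, List.getLast?_cons_cons]
    · obtain ⟨r, hr⟩ := h.exists_eq_cons (t := t) (by omega)
      rw [(h.push t ht hb).2, ← ih (by omega), hr, List.getLast?_cons_cons]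

lemma nodup {t : ℕ} (ht : t ≤ T) : (S t).Nodup := by
  induction t with
  | zero => simp [h.start]
  | succ t ih =>
    cases hb : b t
    · obtain ⟨r, hr, hr'⟩ := h.pop t ht hb
      rw [hr']
      exact (hr ▸ ih (by omega)).of_cons
    · obtain ⟨hfresh, hS⟩ := h.push t ht hb
      exact hS ▸ List.nodup_cons.2 ⟨hfresh, ih (by omega)⟩

lemma length_add {t : ℕ} (ht : t ≤ T) : (S t).length + t = 1 + 2 * upCount b t := by
  induction t with
  | zero => simp [h.start]
  | succ t ih =>
    have := ih (by omega)
    cases hb : b t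
    · obtain ⟨r, hr, hr'⟩ := h.pop t ht hb
      rw [hr] at this
      simp only [hr', upCount_succ, hb, Bool.false_eq_true, ↓reduceIte, List.length_cons]
        at this ⊢
      omega
    · simp only [(h.push t ht hb).2, upCount_succ, hb, ↓reduceIte, List.length_cons]
      omega

lemma apply_eq_of_push_eq {w' : ℕ → V} {S' : ℕ → List V} (h' : IsStackRun b w' S' T)
    (h0 : w 0 = w' 0) (hpush : ∀ t < T, b t → w (t + 1) = w' (t + 1)) {t : ℕ} (ht : t ≤ T) :
    w t = w' t := by
  suffices hS : S t = S' t by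
    obtain ⟨r, hr⟩ := h.exists_eq_cons ht
    obtain ⟨r', hr'⟩ := h'.exists_eq_cons ht
    rw [hr, hr'] at hS
    exact (List.cons.inj hS).1
  induction t with
  | zero => rw [h.start, h'.start, h0]
  | succ t ih =>
    cases hb : b t
    · obtain ⟨r, hr, hr1⟩ := h.pop t ht hb
      obtain ⟨r', hr', hr1'⟩ := h'.pop t ht hb
      have := ih (by omega)
      rw [hr, hr'] at this
      rw [hr1, hr1', (List.cons.inj this).2]
    · rw [(h.push t ht hb).2, (h'.push t ht hb).2, ih (by omega), hpush t ht hb]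

variable [DecidableEq V]

lemma mem_visited {t : ℕ} (ht : t ≤ T) {x : V} (hx : x ∈ S t) : x ∈ visited w t := by
  induction t generalizing x with
  | zero => simpa [h.start] using hx
  | succ t ih =>
    rw [visited_succ]
    cases hb : b t
    · obtain ⟨r, hr, hr'⟩ := h.pop t ht hb
      rw [hr'] at hx
      exact mem_insert_of_mem (ih (by omega) (hr ▸ List.mem_cons_of_mem _ hx))
    · rw [(h.push t ht hb).2] at hx
      rcases List.mem_cons.1 hx with rfl | hx
      · exact mem_insert_self _ _
      · exact mem_insert_of_mem (ih (by omega) hx)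

lemma mem_visited_of_pop {t : ℕ} (ht : t < T) (hb : b t = false) :
    w (t + 1) ∈ visited w t := by
  obtain ⟨r, hr, -⟩ := h.pop t ht hb
  exact h.mem_visited ht.le (by simp [hr])

lemma odd_edgeCount_iff {t : ℕ} (ht : t ≤ T) (e : Sym2 V) :
    Odd (edgeCount w t e) ↔ e ∈ pathEdges (S t) := by
  induction t generalizing e with
  | zero => simp [h.start, pathEdges]
  | succ t ih =>
    rw [odd_edgeCount_succ_iff, ih (by omega)]
    cases hb : b t
    · obtain ⟨r, hr, hr'⟩ := h.pop t ht hb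
      have hnd := hr ▸ h.nodup (t := t) (by omega)
      have hnot : stepEdge w t ∉ pathEdges (w (t + 1) :: r) := fun he =>
        (List.nodup_cons.1 hnd).1 (mem_of_mem_pathEdges he (Sym2.mem_mk_left _ _))
      rw [hr, hr', pathEdges_cons_cons, ← stepEdge]
      by_cases he : stepEdge w t = e
      · subst he; simp [hnot]
      · simp [he, Ne.symm he]
    · obtain ⟨hfresh, hS⟩ := h.push t ht hb
      obtain ⟨r, hr⟩ := h.exists_eq_cons (t := t) (by omega)
      have hnot : stepEdge w t ∉ pathEdges (S t) := fun he =>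
        hfresh (mem_of_mem_pathEdges he (Sym2.mem_mk_right _ _))
      rw [hS, hr, pathEdges_cons_cons, Sym2.eq_swap, ← stepEdge, ← hr]
      by_cases he : stepEdge w t = e
      · subst he; simp [hnot]
      · simp [he, Ne.symm he]

lemma map {g : V → W} (hg : Set.InjOn g (visited w T)) :
    IsStackRun b (g ∘ w) (fun t => (S t).map g) T := by
  refine ⟨by simp [h.start], fun t ht hb => ?_, fun t ht hb => ?_⟩
  · obtain ⟨hfresh, hS⟩ := h.push t ht hb
    refine ⟨fun hmem => hfresh ?_, by simp [hS]⟩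
    obtain ⟨x, hx, hgx⟩ := List.mem_map.1 hmem
    have hxT : x ∈ visited w T := visited_mono (by omega) (h.mem_visited ht.le hx)
    rwa [← hg hxT (apply_mem_visited ht) hgx]
  · obtain ⟨r, hr, hr'⟩ := h.pop t ht hb
    exact ⟨r.map g, by simp [hr], by simp [hr']⟩

end IsStackRun

/-! ## Ballot sequences -/

structure IsBallot (k : ℕ) (b : ℕ → Bool) : Prop where
  le_two_mul_upCount : ∀ t ≤ 2 * k, t ≤ 2 * upCount b t
  upCount_two_mul : upCount b (2 * k) = k

/-- The stack of the depth-first traversal of the plane tree coded by `b`, its vertices being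
labelled `0, 1, 2, …` in order of discovery. -/
def dyckStack (b : ℕ → Bool) : ℕ → List ℕ
  | 0 => [0]
  | t + 1 => if b t then (upCount b t + 1) :: dyckStack b t else (dyckStack b t).tail

def dyckLabel (b : ℕ → Bool) (t : ℕ) : ℕ := (dyckStack b t).headD 0

lemma dyckStack_congr {b b' : ℕ → Bool} {t : ℕ} (h : ∀ s < t, b s = b' s) :
    dyckStack b t = dyckStack b' t := by
  induction t with
  | zero => rfl
  | succ t ih =>
    have hu : upCount b t = upCount b' t := upCount_congr fun s hs => h s (by omega)
    simp only [dyckStack, h t (by omega), ih fun s hs => h s (by omega), hu]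

lemma le_upCount_of_mem_dyckStack {b : ℕ → Bool} {t x : ℕ} (hx : x ∈ dyckStack b t) :
    x ≤ upCount b t := by
  induction t with
  | zero => simpa [dyckStack] using hx
  | succ t ih =>
    rw [upCount_succ]
    by_cases hbt : b t
    · simp only [dyckStack, hbt, ↓reduceIte, List.mem_cons] at hx
      rcases hx with rfl | hx
      · simp [hbt]
      · have := ih hx; omega
    · simp only [dyckStack, hbt, Bool.false_eq_true, ↓reduceIte] at hx
      exact (ih (List.mem_of_mem_tail hx)).trans (Nat.le_add_right _ _)

/-- The time at which the `m`-th vertex is discovered (junk `0` if there are fewer than `m`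
up-steps). -/
noncomputable def pushTime (b : ℕ → Bool) (m : ℕ) : ℕ := sInf {t | m ≤ upCount b t}

lemma pushTime_zero (b : ℕ → Bool) : pushTime b 0 = 0 :=
  Nat.sInf_eq_zero.2 (Or.inl (by simp))

lemma pushTime_upCount_succ {b : ℕ → Bool} {t : ℕ} (hbt : b t) :
    pushTime b (upCount b t + 1) = t + 1 := by
  refine le_antisymm (Nat.sInf_le (by simp [upCount_succ, hbt])) (le_csInf ⟨t + 1, ?_⟩ ?_)
  · simp [upCount_succ, hbt]
  · intro s hs
    by_contra hlt
    have := upCount_mono b (show s ≤ t by omega)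
    simp only [Set.mem_ofPred_eq] at hs
    omega

namespace IsBallot

variable {k : ℕ} {b : ℕ → Bool} (hb : IsBallot k b)
include hb

lemma isStackRun : IsStackRun b (dyckLabel b) (dyckStack b) (2 * k) := by
  refine IsStackRun.of_step rfl (fun t _ _ hbt => ?_) (fun t ht hrun hbt => ?_)
  · have hS : dyckStack b (t + 1) = (upCount b t + 1) :: dyckStack b t := by
      simp [dyckStack, hbt]
    refine ⟨fun hmem => ?_, by rw [dyckLabel, hS, List.headD_cons]⟩
    have := le_upCount_of_mem_dyckStack hmem
    rw [dyckLabel, hS, List.headD_cons] at this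
    omega
  · have hlen := hrun.length_add (t := t) le_rfl
    have hballot := hb.le_two_mul_upCount (t + 1) ht
    rw [upCount_succ, hbt] at hballot
    match hS : dyckStack b t, hlen with
    | x :: y :: r, _ =>
      have hS' : dyckStack b (t + 1) = y :: r := by simp [dyckStack, hbt, hS]
      exact ⟨r, by simp [dyckLabel, hS, hS'], by simp [dyckLabel, hS']⟩
    | [], hlen | [_], hlen => simp at hlen hballot; omega

lemma dyckLabel_le {t : ℕ} (ht : t ≤ 2 * k) : dyckLabel b t ≤ k := by
  obtain ⟨r, hr⟩ := hb.isStackRun.exists_eq_cons ht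
  calc dyckLabel b t ≤ upCount b t := le_upCount_of_mem_dyckStack (by simp [hr])
    _ ≤ upCount b (2 * k) := upCount_mono b ht
    _ = k := hb.upCount_two_mul

lemma dyckStack_two_mul : dyckStack b (2 * k) = [0] := by
  have hlen := hb.isStackRun.length_add (t := 2 * k) le_rfl
  have hlast := hb.isStackRun.getLast?_eq (t := 2 * k) le_rfl
  rw [hb.upCount_two_mul] at hlen
  obtain ⟨a, ha⟩ := List.length_eq_one_iff.1 (by omega : (dyckStack b (2 * k)).length = 1)
  rw [ha] at hlast ⊢
  simpa [dyckLabel, dyckStack] using hlast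

lemma exists_push {m : ℕ} (hm : 0 < m) (hmk : m ≤ k) :
    ∃ t < 2 * k, b t ∧ upCount b t + 1 = m := by
  have hne : {t | m ≤ upCount b t}.Nonempty := ⟨2 * k, by simp [hb.upCount_two_mul, hmk]⟩
  have hmem : m ≤ upCount b (pushTime b m) := Nat.sInf_mem hne
  have hle : pushTime b m ≤ 2 * k := Nat.sInf_le (by simp [hb.upCount_two_mul, hmk])
  obtain ⟨s, hs⟩ : ∃ s, pushTime b m = s + 1 := Nat.exists_eq_add_one_of_ne_zero fun h0 => by
    rw [h0, upCount_zero] at hmem; omega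
  have hlt : s ∉ {t | m ≤ upCount b t} := Nat.notMem_of_lt_sInf (show s < pushTime b m by omega)
  simp only [Set.mem_ofPred_eq] at hlt
  rw [hs, upCount_succ] at hmem
  have hbs : b s := by
    by_contra hbs
    simp only [hbs, ↓reduceIte] at hmem
    omega
  rw [if_pos hbs] at hmem
  exact ⟨s, by omega, hbs, by omega⟩

lemma dyckLabel_pushTime {m : ℕ} (hmk : m ≤ k) :
    pushTime b m ≤ 2 * k ∧ dyckLabel b (pushTime b m) = m := by
  rcases Nat.eq_zero_or_pos m with rfl | hm
  · simp [pushTime_zero, dyckLabel, dyckStack]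
  · obtain ⟨t, ht, hbt, rfl⟩ := hb.exists_push hm hmk
    rw [pushTime_upCount_succ hbt]
    exact ⟨ht, by simp [dyckLabel, dyckStack, hbt]⟩

end IsBallot

/-! ## Encoding and decoding walks -/

section Encode

variable {k : ℕ} {b : ℕ → Bool}

/-- The walk around the plane tree coded by `b` whose `m`-th discovered vertex is `f m`. The
labels are reduced mod `k + 1`, but those met within `2 * k` steps are at most `k`. -/
def encodeWalk (b : ℕ → Bool) (f : Fin (k + 1) ↪ V) (t : ℕ) : V :=
  f (Fin.ofNat (k + 1) (dyckLabel b t))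

variable (hb : IsBallot k b) (f : Fin (k + 1) ↪ V)
include hb

lemma IsBallot.val_ofNat_dyckLabel {t : ℕ} (ht : t ≤ 2 * k) :
    (Fin.ofNat (k + 1) (dyckLabel b t)).val = dyckLabel b t := by
  simp [Nat.mod_eq_of_lt (Nat.lt_succ_of_le (hb.dyckLabel_le ht))]

lemma IsBallot.encodeWalk_two_mul : encodeWalk b f (2 * k) = encodeWalk b f 0 := by
  simp [encodeWalk, dyckLabel, hb.dyckStack_two_mul, dyckStack]

lemma IsBallot.encodeWalk_pushTime (m : Fin (k + 1)) : encodeWalk b f (pushTime b m) = f m := by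
  rw [encodeWalk, (hb.dyckLabel_pushTime (Nat.lt_succ_iff.1 m.isLt)).2]
  simp

lemma IsBallot.isStackRun_encodeWalk :
    IsStackRun b (encodeWalk b f)
      (fun t => (dyckStack b t).map fun m => f (Fin.ofNat (k + 1) m)) (2 * k) := by
  refine hb.isStackRun.map (g := fun m => f (Fin.ofNat (k + 1) m)) fun m hm m' hm' hmm' => ?_
  obtain ⟨s, hs, rfl⟩ := mem_visited.1 hm
  obtain ⟨s', hs', rfl⟩ := mem_visited.1 hm'
  have := congrArg Fin.val (f.injective hmm')
  rwa [hb.val_ofNat_dyckLabel hs, hb.val_ofNat_dyckLabel hs'] at this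

variable [DecidableEq V]

lemma IsBallot.visited_encodeWalk : visited (encodeWalk b f) (2 * k) = univ.map f := by
  ext x
  simp only [mem_visited, mem_map, mem_univ, true_and]
  constructor
  · rintro ⟨t, -, rfl⟩
    exact ⟨_, rfl⟩
  · rintro ⟨m, rfl⟩
    exact ⟨_, (hb.dyckLabel_pushTime (Nat.lt_succ_iff.1 m.isLt)).1, hb.encodeWalk_pushTime f m⟩

lemma IsBallot.isEvenWalk_encodeWalk : IsEvenWalk k (encodeWalk b f) := by
  refine ⟨fun e => ?_, by simp [hb.visited_encodeWalk]⟩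
  rw [← Nat.not_odd_iff_even, (hb.isStackRun_encodeWalk f).odd_edgeCount_iff le_rfl,
    hb.dyckStack_two_mul]
  simp [pathEdges]

lemma IsBallot.freshStep_encodeWalk {t : ℕ} (ht : t < 2 * k) :
    freshStep (encodeWalk b f) t = b t := by
  cases hbt : b t
  · simpa [freshStep] using (hb.isStackRun_encodeWalk f).mem_visited_of_pop ht hbt
  · simp only [freshStep, decide_eq_true_eq, mem_visited, not_exists, not_and]
    intro s hs hfs
    have := congrArg Fin.val (f.injective hfs)
    rw [hb.val_ofNat_dyckLabel (by omega), hb.val_ofNat_dyckLabel (by omega)] at this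
    have hlabel : dyckLabel b (t + 1) = upCount b t + 1 := by simp [dyckLabel, dyckStack, hbt]
    obtain ⟨r, hr⟩ := hb.isStackRun.exists_eq_cons (t := s) (by omega)
    have := (le_upCount_of_mem_dyckStack (x := dyckLabel b s) (by simp [hr])).trans
      (upCount_mono b hs)
    omega

end Encode

section Decode

variable [DecidableEq V] {k : ℕ} {w : ℕ → V}

def walkStack (w : ℕ → V) : ℕ → List V
  | 0 => [w 0]
  | t + 1 => if freshStep w t then w (t + 1) :: walkStack w t else (walkStack w t).tail

lemma injective_pushTime (hb : IsBallot k (freshStep w)) :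
    Function.Injective fun m : Fin (k + 1) => w (pushTime (freshStep w) m) := by
  suffices h : ∀ m m' : Fin (k + 1), m < m' →
      w (pushTime (freshStep w) m) ≠ w (pushTime (freshStep w) m') by
    intro m m' hmm'
    by_contra hne
    rcases lt_or_gt_of_ne hne with hlt | hlt
    exacts [h m m' hlt hmm', h m' m hlt hmm'.symm]
  intro m m' hlt
  obtain ⟨t, -, hfresh, hm'⟩ := hb.exists_push (m := m') (by omega) (by omega)
  have hle : pushTime (freshStep w) m ≤ t := Nat.sInf_le (show (m : ℕ) ≤ _ by omega)
  rw [← hm', pushTime_upCount_succ hfresh]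
  simp only [freshStep, decide_eq_true_eq] at hfresh
  exact fun h => hfresh (h ▸ apply_mem_visited hle)

namespace IsEvenWalk

variable (hw : IsEvenWalk k w)
include hw

/-- When the walk does not discover a vertex, the edge it takes has been traversed once, so by
parity it lies on the stack path; being at the top, it leads to the vertex below. -/
lemma isStackRun : IsStackRun (freshStep w) w (walkStack w) (2 * k) := by
  refine IsStackRun.of_step rfl (fun t _ hrun hfresh => ?_) (fun t ht hrun hfresh => ?_)
  · have hnew : w (t + 1) ∉ visited w t := by simpa [freshStep] using hfresh
    exact ⟨fun h => hnew (hrun.mem_visited le_rfl h), by simp [walkStack, hfresh]⟩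
  · have hold : w (t + 1) ∈ visited w t := by simpa [freshStep] using hfresh
    have hodd : stepEdge w t ∈ pathEdges (walkStack w t) := by
      rw [← hrun.odd_edgeCount_iff le_rfl, hw.edgeCount_stepEdge_eq_one ht hold]
      exact odd_one
    obtain ⟨r, hr⟩ := hrun.exists_eq_cons le_rfl
    match r, hr with
    | [], hr => simp [hr, pathEdges] at hodd
    | y :: r, hr =>
      have hy : w (t + 1) = y := by
        rcases Sym2.eq_iff.1 (eq_of_mem_pathEdges (hr ▸ hrun.nodup le_rfl) (hr ▸ hodd)
          (Sym2.mem_mk_left _ _)) with ⟨-, h⟩ | ⟨h1, h2⟩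
        exacts [h, h2.trans h1]
      subst hy
      exact ⟨r, hr, by simp [walkStack, hfresh, hr]⟩

lemma isBallot_freshStep : IsBallot k (freshStep w) := by
  have hrun := hw.isStackRun
  refine ⟨fun t ht => ?_, ?_⟩
  · have := hrun.length_add ht
    obtain ⟨r, hr⟩ := hrun.exists_eq_cons ht
    simp only [hr, List.length_cons] at this
    omega
  · have hempty : pathEdges (walkStack w (2 * k)) = ∅ := eq_empty_of_forall_notMem fun e he =>
      Nat.not_odd_iff_even.2 (hw.even_edgeCount e) ((hrun.odd_edgeCount_iff le_rfl e).2 he)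
    have hlen := hrun.length_add le_rfl
    have := pathEdges_eq_empty_iff.1 hempty
    obtain ⟨r, hr⟩ := hrun.exists_eq_cons le_rfl
    simp only [hr, List.length_cons] at this hlen
    omega

noncomputable def discovery : Fin (k + 1) ↪ V :=
  ⟨fun m => w (pushTime (freshStep w) m), injective_pushTime hw.isBallot_freshStep⟩

lemma encodeWalk_discovery {t : ℕ} (ht : t ≤ 2 * k) :
    encodeWalk (freshStep w) hw.discovery t = w t := by
  have hb := hw.isBallot_freshStep
  refine (hb.isStackRun_encodeWalk hw.discovery).apply_eq_of_push_eq hw.isStackRun ?_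
    (fun t ht hfresh => ?_) ht
  · simp [encodeWalk, dyckLabel, dyckStack, discovery, pushTime_zero]
  · have hlabel : dyckLabel (freshStep w) (t + 1) = upCount (freshStep w) t + 1 := by
      simp [dyckLabel, dyckStack, hfresh]
    simp only [encodeWalk, discovery, Function.Embedding.coeFn_mk]
    rw [hb.val_ofNat_dyckLabel ht, hlabel, pushTime_upCount_succ hfresh]

end IsEvenWalk

end Decode

/-! ## Dyck words, cyclic walks and their count -/

section DyckWord

open DyckStep

def upStep (l : List DyckStep) (t : ℕ) : Bool := decide (l[t]? = some U)

lemma count_U_add_count_D (l : List DyckStep) : l.count U + l.count D = l.length := by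
  induction l with
  | nil => rfl
  | cons a l ih => cases a <;> simp <;> omega

lemma upCount_upStep (l : List DyckStep) (t : ℕ) : upCount (upStep l) t = (l.take t).count U := by
  induction t with
  | zero => simp
  | succ t ih =>
    rw [upCount_succ, ih, List.take_add_one, List.count_append]
    rcases h : l[t]? with _ | ⟨_ | _⟩ <;> simp [upStep, h]

variable {k : ℕ}

lemma length_toList {p : DyckWord} (hp : p.semilength = k) : p.toList.length = 2 * k := by
  rw [← p.two_mul_semilength_eq_length, hp]

lemma isBallot_upStep {p : DyckWord} (hp : p.semilength = k) : IsBallot k (upStep p.toList) := by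
  have hlen := length_toList hp
  refine ⟨fun t ht => ?_, ?_⟩
  · have h1 := p.count_D_le_count_U t
    have h2 := count_U_add_count_D (p.toList.take t)
    rw [List.length_take, hlen, min_eq_left ht] at h2
    rw [upCount_upStep]
    omega
  · rw [upCount_upStep, List.take_of_length_le (by omega)]
    exact hp

lemma getElem?_toList_eq {p : DyckWord} (hp : p.semilength = k) {t : ℕ} (ht : t < 2 * k) :
    p.toList[t]? = some (if upStep p.toList t then U else D) := by
  have hlen := length_toList hp
  rw [List.getElem?_eq_getElem (by omega)]
  rcases DyckStep.dichotomy p.toList[t] with h | h <;>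
    simp [upStep, h, List.getElem?_eq_getElem (show t < p.toList.length by omega)]

lemma eq_of_upStep_eq {p p' : DyckWord} (hp : p.semilength = k)
    (hp' : p'.semilength = k) (h : ∀ t < 2 * k, upStep p.toList t = upStep p'.toList t) :
    p = p' := by
  have hlen := length_toList hp
  have hlen' := length_toList hp'
  refine DyckWord.ext (List.ext_getElem? fun t => ?_)
  by_cases ht : t < 2 * k
  · rw [getElem?_toList_eq hp ht, getElem?_toList_eq hp' ht, h t ht]
  · rw [List.getElem?_eq_none (by omega), List.getElem?_eq_none (by omega)]

lemma IsBallot.exists_upStep_eq {b : ℕ → Bool} (hb : IsBallot k b) :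
    ∃ p : DyckWord, p.semilength = k ∧ ∀ t < 2 * k, upStep p.toList t = b t := by
  set l := (List.range (2 * k)).map fun t => if b t then U else D
  have hlen : l.length = 2 * k := by simp [l]
  have hstep : ∀ t < 2 * k, upStep l t = b t := fun t ht => by
    cases hbt : b t <;> simp [l, upStep, ht, hbt]
  have hU : ∀ t ≤ 2 * k, (l.take t).count U = upCount b t := fun t ht => by
    rw [← upCount_upStep, upCount_congr fun s hs => hstep s (by omega)]
  have hD : ∀ t ≤ 2 * k, (l.take t).count D = t - upCount b t := fun t ht => by
    have := count_U_add_count_D (l.take t)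
    rw [List.length_take, hU t ht, hlen, min_eq_left ht] at this
    omega
  have hfull : l.take (2 * k) = l := List.take_of_length_le hlen.le
  have hUl : l.count U = k := by rw [← hfull, hU _ le_rfl, hb.upCount_two_mul]
  have hDl : l.count D = k := by rw [← hfull, hD _ le_rfl, hb.upCount_two_mul]; omega
  refine ⟨⟨l, by rw [hUl, hDl], fun i => ?_⟩, hUl, hstep⟩
  rcases le_or_gt i (2 * k) with hi | hi
  · rw [hU i hi, hD i hi]
    have := hb.le_two_mul_upCount i hi
    omega
  · rw [List.take_of_length_le (by omega), hUl, hDl]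

end DyckWord

section Cycle

def IsEvenCycle (k : ℕ) (i : ZMod (2 * k) → V) : Prop :=
  (∀ e : Sym2 V, Even (Nat.card {q : ZMod (2 * k) // s(i q, i (q + 1)) = e})) ∧
    Nat.card (Set.range i) = k + 1

variable [DecidableEq V] {k : ℕ}

lemma natCard_zmod_subtype {r : ℕ} [NeZero r] (P : ℕ → Prop) [DecidablePred P] :
    Nat.card {q : ZMod r // P q.val} = #{t ∈ range r | P t} := by
  rw [Nat.card_eq_fintype_card, Fintype.card_subtype]
  refine card_nbij' ZMod.val (fun t => (t : ZMod r)) (fun q hq => ?_) (fun t ht => ?_)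
    (fun q _ => ZMod.natCast_zmod_val q) (fun t ht => ?_)
  · simpa [ZMod.val_lt] using hq
  · simp only [coe_filter, mem_range, Set.mem_ofPred_eq] at ht
    simpa [ZMod.val_cast_of_lt ht.1] using ht.2
  · simp only [coe_filter, mem_range, Set.mem_ofPred_eq] at ht
    exact ZMod.val_cast_of_lt ht.1

lemma isEvenCycle_iff (hk : 0 < k) {w : ℕ → V} (hcl : w (2 * k) = w 0) :
    IsEvenCycle k (fun q => w q.val) ↔ IsEvenWalk k w := by
  have : NeZero (2 * k) := ⟨by omega⟩
  have hstep (q : ZMod (2 * k)) : s(w q.val, w (q + 1).val) = stepEdge w q.val := by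
    rw [stepEdge, ZMod.val_add, ZMod.val_one'' (by omega)]
    rcases Nat.lt_or_ge (q.val + 1) (2 * k) with h | h
    · rw [Nat.mod_eq_of_lt h]
    · rw [show q.val + 1 = 2 * k by have := q.val_lt; omega, Nat.mod_self, hcl]
  have hrange : Set.range (fun q : ZMod (2 * k) => w q.val) = visited w (2 * k) := by
    ext x
    simp only [Set.mem_range, mem_coe, mem_visited]
    constructor
    · rintro ⟨q, rfl⟩
      exact ⟨q.val, q.val_lt.le, rfl⟩
    · rintro ⟨t, ht, rfl⟩
      rcases ht.lt_or_eq with ht | rfl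
      · exact ⟨t, by rw [ZMod.val_cast_of_lt ht]⟩
      · exact ⟨0, by rw [ZMod.val_zero, hcl]⟩
  have hcount (e : Sym2 V) :
      Nat.card {q : ZMod (2 * k) // s(w q.val, w (q + 1).val) = e} = edgeCount w (2 * k) e := by
    simp only [hstep]
    exact natCard_zmod_subtype (stepEdge w · = e)
  simp only [IsEvenCycle, hcount, hrange, Nat.card_coe_set_eq, Set.ncard_coe_finset]
  exact ⟨fun ⟨he, hc⟩ => ⟨he, hc⟩, fun ⟨he, hc⟩ => ⟨he, hc⟩⟩

lemma freshStep_congr {w w' : ℕ → V} {t : ℕ} (h : ∀ s ≤ t + 1, w s = w' s) :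
    freshStep w t = freshStep w' t := by
  have hv : visited w t = visited w' t :=
    image_congr fun s hs => h s (by simp at hs; omega)
  rw [freshStep, freshStep, hv, h (t + 1) le_rfl]

def encode (x : {p : DyckWord // p.semilength = k} × (Fin (k + 1) ↪ V)) (q : ZMod (2 * k)) : V :=
  encodeWalk (upStep x.1.1.toList) x.2 q.val

lemma isEvenCycle_encode (hk : 0 < k)
    (x : {p : DyckWord // p.semilength = k} × (Fin (k + 1) ↪ V)) :
    IsEvenCycle k (encode x) :=
  have hb := isBallot_upStep x.1.2
  (isEvenCycle_iff hk (hb.encodeWalk_two_mul x.2)).2 (hb.isEvenWalk_encodeWalk x.2)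

lemma encode_injective (hk : 0 < k) : Function.Injective (encode (k := k) (V := V)) := by
  have : NeZero (2 * k) := ⟨by omega⟩
  rintro ⟨⟨p, hp⟩, f⟩ ⟨⟨p', hp'⟩, f'⟩ h
  have hb := isBallot_upStep hp
  have hb' := isBallot_upStep hp'
  have hwalk : ∀ t ≤ 2 * k,
      encodeWalk (upStep p.toList) f t = encodeWalk (upStep p'.toList) f' t := by
    intro t ht
    rcases ht.lt_or_eq with ht | rfl
    · simpa [encode, ZMod.val_cast_of_lt ht] using congrFun h (t : ZMod (2 * k))
    · simpa [encode, hb.encodeWalk_two_mul, hb'.encodeWalk_two_mul] using congrFun h 0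
  obtain rfl : p = p' := eq_of_upStep_eq hp hp' fun t ht => by
    rw [← hb.freshStep_encodeWalk f ht, ← hb'.freshStep_encodeWalk f' ht]
    exact freshStep_congr fun s hs => hwalk s (by omega)
  obtain rfl : f = f' := Function.Embedding.ext fun m => by
    rw [← hb.encodeWalk_pushTime f m, ← hb.encodeWalk_pushTime f' m]
    exact hwalk _ (hb.dyckLabel_pushTime (Nat.lt_succ_iff.1 m.isLt)).1
  rfl

lemma exists_encode_eq (hk : 0 < k) {i : ZMod (2 * k) → V} (hi : IsEvenCycle k i) :
    ∃ x, encode x = i := by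
  have : NeZero (2 * k) := ⟨by omega⟩
  set w : ℕ → V := fun t => i t
  have hiw : i = fun q => w q.val := funext fun q => by simp [w]
  rw [hiw, isEvenCycle_iff hk (by simp [w])] at hi
  obtain ⟨p, hp, hpb⟩ := hi.isBallot_freshStep.exists_upStep_eq
  refine ⟨(⟨p, hp⟩, hi.discovery), funext fun q => ?_⟩
  have hq := q.val_lt
  rw [hiw, encode]
  simp only [← hi.encodeWalk_discovery hq.le, encodeWalk, dyckLabel]
  rw [dyckStack_congr (t := q.val) fun s hs => hpb s (by omega)]

theorem natCard_isEvenCycle [Fintype V] (hk : 0 < k) :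
    Nat.card {i : ZMod (2 * k) → V // IsEvenCycle k i} =
      catalan k * (Fintype.card V).descFactorial (k + 1) := by
  have hbij : Function.Bijective fun x => (⟨encode x, isEvenCycle_encode hk x⟩ :
      {i : ZMod (2 * k) → V // IsEvenCycle k i}) :=
    ⟨fun x y h => encode_injective hk (congrArg Subtype.val h),
      fun ⟨i, hi⟩ => (exists_encode_eq hk hi).imp fun x hx => Subtype.ext hx⟩
  rw [← Nat.card_eq_of_bijective _ hbij, Nat.card_prod, Nat.card_eq_fintype_card,
    DyckWord.card_dyckWord_semilength_eq_catalan, Nat.card_eq_fintype_card,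
    Fintype.card_embedding_eq, Fintype.card_fin]

end Cycle

lemma catalan_mul_factorial_mul_factorial (k : ℕ) :
    catalan k * (k.factorial * (k + 1).factorial) = (2 * k).factorial := by
  rw [← Nat.choose_mul_factorial_mul_factorial (show k ≤ 2 * k by omega),
    show 2 * k - k = k by omega, ← Nat.centralBinom_eq_two_mul_choose,
    ← succ_mul_catalan_eq_centralBinom, Nat.factorial_succ]
  ring

lemma pow_le_descFactorial_add (n s : ℕ) :
    (n : ℝ) ^ (s + 1) ≤ n.descFactorial (s + 1) + (s + 1) ^ 2 * (n : ℝ) ^ s := by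
  induction s with
  | zero => simp
  | succ s ih =>
    have hrec : (n.descFactorial (s + 2) : ℝ) = (n - (s + 1)) * n.descFactorial (s + 1) := by
      rw [Nat.descFactorial_succ]
      rcases le_or_gt (s + 1) n with h | h
      · push_cast [Nat.cast_sub h]
        ring
      · rw [Nat.descFactorial_eq_zero_iff_lt.2 h]
        simp
    have hle : (n.descFactorial (s + 1) : ℝ) ≤ (n : ℝ) ^ (s + 1) := by
      exact_mod_cast Nat.descFactorial_le_pow n (s + 1)
    push_cast at ih ⊢
    calc (n : ℝ) ^ (s + 1 + 1) = n * n ^ (s + 1) := by ring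
      _ ≤ n * (n.descFactorial (s + 1) + (s + 1) ^ 2 * n ^ s) := by gcongr
      _ = n.descFactorial (s + 2) + (s + 1) * n.descFactorial (s + 1) +
          (s + 1) ^ 2 * n ^ (s + 1) := by rw [hrec]; ring
      _ ≤ n.descFactorial (s + 2) + (s + 1) * n ^ (s + 1) + (s + 1) ^ 2 * n ^ (s + 1) := by
          gcongr
      _ ≤ n.descFactorial (s + 2) + (s + 1 + 1) ^ 2 * n ^ (s + 1) := by
          nlinarith [pow_nonneg (Nat.cast_nonneg n : (0 : ℝ) ≤ n) (s + 1)]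

lemma abs_descFactorial_sub_pow_le (n s : ℕ) :
    |(n.descFactorial (s + 1) : ℝ) - (n : ℝ) ^ (s + 1)| ≤ (s + 1) ^ 2 * (n : ℝ) ^ s := by
  have hle : (n.descFactorial (s + 1) : ℝ) ≤ (n : ℝ) ^ (s + 1) := by
    exact_mod_cast Nat.descFactorial_le_pow n (s + 1)
  rw [abs_sub_comm, abs_of_nonneg (by linarith)]
  linarith [pow_le_descFactorial_add n s]

end EvenWalk

/-- For fixed even `r > 0`, the number of closed walks of length `r` on the complete
graph on `n` labeled vertices (loops allowed) in which every traversed undirected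
edge is traversed an even number of times and which visit exactly `r/2 + 1` distinct
vertices is `C_{r/2}·n^{r/2+1} + O(n^{r/2})` as `n → ∞`, with
`C_k = (2k)!/(k!(k+1)!)` the Catalan numbers. -/
theorem even_walk_count_asymptotics (r : ℕ) (hr : Even r) (hr0 : 0 < r) :
    ∃ C : ℝ, ∀ n : ℕ,
      |(Nat.card {i : ZMod r → Fin n //
            (∀ e : Sym2 (Fin n),
              Even (Nat.card {q : ZMod r // s(i q, i (q + 1)) = e})) ∧
            Nat.card (Set.range i) = r / 2 + 1} : ℝ) -
          ((Nat.factorial (2 * (r / 2)) : ℝ) /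
              ((Nat.factorial (r / 2) : ℝ) * (Nat.factorial (r / 2 + 1) : ℝ))) *
            (n : ℝ) ^ (r / 2 + 1)| ≤
        C * (n : ℝ) ^ (r / 2) := by
  obtain ⟨k, rfl⟩ := hr
  have hk : 0 < k := by omega
  rw [show (k + k) / 2 = k by omega, show k + k = 2 * k by omega]
  refine ⟨catalan k * (k + 1) ^ 2, fun n => ?_⟩
  have hcount := EvenWalk.natCard_isEvenCycle (V := Fin n) hk
  simp only [EvenWalk.IsEvenCycle, Fintype.card_fin] at hcount
  have hcatalan : ((2 * k).factorial : ℝ) / (k.factorial * (k + 1).factorial) = catalan k := by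
    rw [div_eq_iff (by positivity)]
    exact_mod_cast (EvenWalk.catalan_mul_factorial_mul_factorial k).symm
  rw [hcount, hcatalan, Nat.cast_mul, ← mul_sub, abs_mul, Nat.abs_cast, mul_assoc]
  exact mul_le_mul_of_nonneg_left (EvenWalk.abs_descFactorial_sub_pow_le n k) (Nat.cast_nonneg _)
end
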